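/- arXiv:2503.11936 — 9 statements merged into one kernel-verified Lean document; each statement's English description precedes it below -/
import Mathlib

section
/- The number of alternating permutations σ ∈ S_n with σ(1) = k equals the sum over all i > n−k of the number of alternating permutations τ ∈ S_{n−1} with τ(1) = i. (Here a permutation σ is alternating if σ(1) > σ(2) < σ(3) > σ(4) < ⋯.) -/
/-- A permutation of `Fin n` is alternating if `σ(1) > σ(2) < σ(3) > σ(4) < ⋯`
(in 1-based terms), i.e. it descends at odd (1-based) positions and ascends at even ones. -/
def IsAlt {n : ℕ} (σ : Equiv.Perm (Fin n)) : Prop :=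
  ∀ i : ℕ, ∀ h : i + 1 < n,
    if i % 2 = 0 then σ ⟨i + 1, h⟩ < σ ⟨i, Nat.lt_of_succ_lt h⟩
    else σ ⟨i, Nat.lt_of_succ_lt h⟩ < σ ⟨i + 1, h⟩

/-- The Entringer number `E n k`: the number of alternating permutations of `{1,…,n}`
whose first entry is `k` (1-based values). -/
noncomputable def entringer (n k : ℕ) : ℕ :=
  Nat.card {σ : Equiv.Perm (Fin n) // IsAlt σ ∧ ∀ h : 0 < n, ((σ ⟨0, h⟩ : Fin n) : ℕ) + 1 = k}

namespace EntAux

lemma ofB {α β : Type*} (f : α → β) (hf : Function.Bijective f) (x : α) :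
    Equiv.ofBijective f hf x = f x := rfl

/-- Order-reversing relabeling from `Fin (m+2) \ {c}` to `Fin (m+1)`. -/
def g (m c : ℕ) (v : Fin (m + 2)) : Fin (m + 1) :=
  ⟨if (v : ℕ) ≤ c then m - v else m + 1 - v, by have := v.isLt; split_ifs <;> omega⟩

/-- Its inverse. -/
def h (m c : ℕ) (w : Fin (m + 1)) : Fin (m + 2) :=
  ⟨if m + 1 - c ≤ (w : ℕ) then m - w else m + 1 - w, by have := w.isLt; split_ifs <;> omega⟩

lemma g_val (m c : ℕ) (v : Fin (m + 2)) :
    (g m c v : ℕ) = if (v : ℕ) ≤ c then m - v else m + 1 - v := rfl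

lemma h_val (m c : ℕ) (w : Fin (m + 1)) :
    (h m c w : ℕ) = if m + 1 - c ≤ (w : ℕ) then m - w else m + 1 - w := rfl

lemma g_h (m c : ℕ) (hc : c ≤ m + 1) (w : Fin (m + 1)) : g m c (h m c w) = w := by
  have hw := w.isLt
  apply Fin.ext
  simp only [g_val, h_val]
  split_ifs <;> omega

lemma h_g (m c : ℕ) (hc : c ≤ m + 1) (v : Fin (m + 2)) (hv : (v : ℕ) ≠ c) :
    h m c (g m c v) = v := by
  have := v.isLt
  apply Fin.ext
  simp only [g_val, h_val]
  split_ifs <;> omega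

lemma h_ne (m c : ℕ) (hc : c ≤ m + 1) (w : Fin (m + 1)) : ((h m c w) : ℕ) ≠ c := by
  have := w.isLt
  simp only [h_val]
  split_ifs <;> omega

lemma g_lt_g (m c : ℕ) (hc : c ≤ m + 1) (v₁ v₂ : Fin (m + 2)) (h₁ : (v₁ : ℕ) ≠ c)
    (h₂ : (v₂ : ℕ) ≠ c) : g m c v₁ < g m c v₂ ↔ v₂ < v₁ := by
  have := v₁.isLt; have := v₂.isLt
  simp only [Fin.lt_def, g_val]
  split_ifs <;> omega

lemma h_lt_h (m c : ℕ) (hc : c ≤ m + 1) (w₁ w₂ : Fin (m + 1)) :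
    h m c w₁ < h m c w₂ ↔ w₂ < w₁ := by
  have := w₁.isLt; have := w₂.isLt
  simp only [Fin.lt_def, h_val]
  split_ifs <;> omega

/-- Values of `σ` away from position `0` differ from `c`. -/
lemma sigma_ne (m c : ℕ) (σ : Equiv.Perm (Fin (m + 2)))
    (h0 : ((σ ⟨0, by omega⟩ : Fin (m + 2)) : ℕ) = c)
    (x : Fin (m + 2)) (hx : (x : ℕ) ≠ 0) : ((σ x : Fin (m + 2)) : ℕ) ≠ c := by
  intro hcon
  apply hx
  have hx0 : x = ⟨0, by omega⟩ := σ.injective (Fin.ext (by rw [hcon, h0]))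
  rw [hx0]

/-- The forward map on underlying functions. -/
def Ff (m c : ℕ) (σ : Equiv.Perm (Fin (m + 2))) : Fin (m + 1) → Fin (m + 1) :=
  fun j => g m c (σ j.succ)

lemma Ff_mk (m c : ℕ) (σ : Equiv.Perm (Fin (m + 2))) (a : ℕ) (ha : a < m + 1) :
    Ff m c σ ⟨a, ha⟩ = g m c (σ ⟨a + 1, by omega⟩) := rfl

/-- The backward map on underlying functions. -/
def Gf (m c : ℕ) (hc : c ≤ m + 1) (τ : Equiv.Perm (Fin (m + 1))) : Fin (m + 2) → Fin (m + 2) :=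
  fun x => Fin.cases (motive := fun _ => Fin (m + 2)) ⟨c, by omega⟩ (fun j => h m c (τ j)) x

lemma Gf_mk_zero (m c : ℕ) (hc : c ≤ m + 1) (τ : Equiv.Perm (Fin (m + 1))) (h0 : 0 < m + 2) :
    Gf m c hc τ ⟨0, h0⟩ = ⟨c, by omega⟩ := by
  simp only [Gf]
  rw [show (⟨0, h0⟩ : Fin (m + 2)) = 0 from Fin.ext (by simp)]
  exact Fin.cases_zero

lemma Gf_succ (m c : ℕ) (hc : c ≤ m + 1) (τ : Equiv.Perm (Fin (m + 1))) (a : ℕ)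
    (ha : a + 1 < m + 2) :
    Gf m c hc τ ⟨a + 1, ha⟩ = h m c (τ ⟨a, by omega⟩) := by
  simp only [Gf]
  exact Fin.cases_succ' ha

lemma Gf_succ' (m c : ℕ) (hc : c ≤ m + 1) (τ : Equiv.Perm (Fin (m + 1))) (j : Fin (m + 1)) :
    Gf m c hc τ j.succ = h m c (τ j) := by
  simp only [Gf]
  exact Fin.cases_succ _

lemma F_bij (m c : ℕ) (hc : c ≤ m + 1) (σ : Equiv.Perm (Fin (m + 2)))
    (h0 : ((σ ⟨0, by omega⟩ : Fin (m + 2)) : ℕ) = c) :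
    Function.Bijective (Ff m c σ) := by
  rw [Fintype.bijective_iff_injective_and_card]
  refine ⟨?_, rfl⟩
  intro j₁ j₂ hj
  have hne : ∀ j : Fin (m + 1), ((σ j.succ : Fin (m + 2)) : ℕ) ≠ c := fun j =>
    sigma_ne m c σ h0 _ (by simp)
  have hs : σ j₁.succ = σ j₂.succ := by
    have h2 := congrArg (h m c) hj
    simpa only [Ff, h_g m c hc _ (hne j₁), h_g m c hc _ (hne j₂)] using h2
  exact Fin.succ_injective _ (σ.injective hs)

lemma G_bij (m c : ℕ) (hc : c ≤ m + 1) (τ : Equiv.Perm (Fin (m + 1))) :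
    Function.Bijective (Gf m c hc τ) := by
  rw [Fintype.bijective_iff_injective_and_card]
  refine ⟨?_, rfl⟩
  intro a b hab
  induction a using Fin.cases with
  | zero =>
    induction b using Fin.cases with
    | zero => rfl
    | succ j =>
      rw [show (0 : Fin (m + 2)) = ⟨0, by omega⟩ from Fin.ext (by simp),
        Gf_mk_zero, show (j.succ : Fin (m + 2)) = ⟨(j : ℕ) + 1, by omega⟩ from rfl,
        Gf_succ] at hab
      exact absurd (congrArg Fin.val hab).symm
        (by rw [show (⟨(j : ℕ), by omega⟩ : Fin (m + 1)) = j from Fin.ext rfl]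
            exact h_ne m c hc (τ j))
  | succ j₁ =>
    induction b using Fin.cases with
    | zero =>
      rw [show (0 : Fin (m + 2)) = ⟨0, by omega⟩ from Fin.ext (by simp),
        Gf_mk_zero, show (j₁.succ : Fin (m + 2)) = ⟨(j₁ : ℕ) + 1, by omega⟩ from rfl,
        Gf_succ] at hab
      exact absurd (congrArg Fin.val hab)
        (by rw [show (⟨(j₁ : ℕ), by omega⟩ : Fin (m + 1)) = j₁ from Fin.ext rfl]
            exact h_ne m c hc (τ j₁))
    | succ j₂ =>
      rw [Gf_succ', Gf_succ'] at hab
      have h2 := congrArg (g m c) hab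
      simp only [g_h m c hc] at h2
      rw [τ.injective h2]

end EntAux

open EntAux in
/-- `E_{n,k} = ∑_{i > n-k} E_{n-1,i}`. -/
theorem entringer_recurrence (n k : ℕ) (hn : 2 ≤ n) (hk1 : 1 ≤ k) (hkn : k ≤ n) :
    entringer n k = ∑ i ∈ Finset.Ioc (n - k) (n - 1), entringer (n - 1) i := by
  classical
  obtain ⟨m, rfl⟩ : ∃ m, n = m + 2 := ⟨n - 2, by omega⟩
  obtain ⟨c, rfl⟩ : ∃ c, k = c + 1 := ⟨k - 1, by omega⟩
  have hc : c ≤ m + 1 := by omega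
  have h1 : m + 2 - (c + 1) = m + 1 - c := by omega
  have h2 : m + 2 - 1 = m + 1 := by omega
  simp only [h1, h2]
  -- `entringer` as a filter cardinality
  have ecard : ∀ (N K : ℕ),
      entringer (N + 1) K = (Finset.univ.filter
        (fun σ : Equiv.Perm (Fin (N + 1)) =>
          IsAlt σ ∧ ((σ ⟨0, Nat.succ_pos N⟩ : Fin (N + 1)) : ℕ) + 1 = K)).card := by
    intro N K
    rw [entringer, Nat.card_eq_fintype_card, Fintype.card_subtype]
    congr 1
    ext σ
    simp only [Finset.mem_filter, Finset.mem_univ, true_and]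
    constructor
    · rintro ⟨ha, hb⟩; exact ⟨ha, hb (Nat.succ_pos N)⟩
    · rintro ⟨ha, hb⟩; exact ⟨ha, fun _ => hb⟩
  have eL := ecard (m + 1) (c + 1)
  set A : Finset (Equiv.Perm (Fin (m + 2))) := Finset.univ.filter
    (fun σ => IsAlt σ ∧ ((σ ⟨0, Nat.succ_pos (m + 1)⟩ : Fin (m + 2)) : ℕ) + 1 = c + 1) with hA
  set B : Finset (Equiv.Perm (Fin (m + 1))) := Finset.univ.filter
    (fun τ => IsAlt τ ∧ ((τ ⟨0, Nat.succ_pos m⟩ : Fin (m + 1)) : ℕ) + 1 ∈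
      Finset.Ioc (m + 1 - c) (m + 1)) with hB
  have step2 : B.card = ∑ i ∈ Finset.Ioc (m + 1 - c) (m + 1), entringer (m + 1) i := by
    rw [Finset.card_eq_sum_card_fiberwise
      (f := fun τ : Equiv.Perm (Fin (m + 1)) => ((τ ⟨0, Nat.succ_pos m⟩ : Fin (m + 1)) : ℕ) + 1)
      (t := Finset.Ioc (m + 1 - c) (m + 1))
      (fun τ hτ => by have hτ' : τ ∈ B := hτ; simp only [hB, Finset.mem_filter] at hτ'; exact hτ'.2.2)]
    refine Finset.sum_congr rfl (fun i hi => ?_)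
    rw [ecard m i]
    congr 1
    ext τ
    simp only [hB, Finset.mem_filter, Finset.mem_univ, true_and]
    constructor
    · rintro ⟨⟨ha, -⟩, hb⟩; exact ⟨ha, hb⟩
    · rintro ⟨ha, hb⟩; exact ⟨⟨ha, hb ▸ hi⟩, hb⟩
  rw [eL, ← step2]
  clear eL ecard step2
  refine Finset.card_bij'
    (fun σ hσ => Equiv.ofBijective (Ff m c σ)
      (F_bij m c hc σ (by
        have := (Finset.mem_filter.mp hσ).2.2
        omega)))
    (fun τ _ => Equiv.ofBijective (Gf m c hc τ) (G_bij m c hc τ)) ?_ ?_ ?_ ?_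
  · -- F σ ∈ B
    intro σ hσ
    simp only [hA, Finset.mem_filter, Finset.mem_univ, true_and] at hσ
    obtain ⟨hAlt, h0⟩ := hσ
    have h0' : ((σ ⟨0, by omega⟩ : Fin (m + 2)) : ℕ) = c := by omega
    simp only [hB, Finset.mem_filter, Finset.mem_univ, true_and]
    constructor
    · -- IsAlt (F σ)
      intro i hi
      have key := hAlt (i + 1) (by omega)
      have n1 : ((σ (⟨i + 1, by omega⟩ : Fin (m + 2)) : Fin (m + 2)) : ℕ) ≠ c :=
        sigma_ne m c σ h0' _ (by simp)
      have n2 : ((σ (⟨i + 1 + 1, by omega⟩ : Fin (m + 2)) : Fin (m + 2)) : ℕ) ≠ c :=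
        sigma_ne m c σ h0' _ (by simp)
      rcases Nat.mod_two_eq_zero_or_one i with hp | hp
      · rw [if_pos hp]
        rw [if_neg (by omega)] at key
        rw [ofB, ofB, Ff_mk, Ff_mk]
        exact (g_lt_g m c hc _ _ n2 n1).mpr key
      · rw [if_neg (by omega)]
        rw [if_pos (by omega)] at key
        rw [ofB, ofB, Ff_mk, Ff_mk]
        exact (g_lt_g m c hc _ _ n1 n2).mpr key
    · -- first entry in range
      have key := hAlt 0 (by omega)
      rw [if_pos rfl] at key
      have hlt : ((σ ⟨0 + 1, by omega⟩ : Fin (m + 2)) : ℕ) < c := by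
        have hkey := Fin.lt_def.mp key
        omega
      rw [ofB, Ff_mk]
      have hvlt := (σ (⟨0 + 1, by omega⟩ : Fin (m + 2))).isLt
      simp only [Finset.mem_Ioc, g_val]
      split_ifs <;> omega
  · -- G τ ∈ A
    intro τ hτ
    simp only [hB, Finset.mem_filter, Finset.mem_univ, true_and, Finset.mem_Ioc] at hτ
    obtain ⟨hAlt, hr1, hr2⟩ := hτ
    have hτ0 := (τ ⟨0, Nat.succ_pos m⟩).isLt
    simp only [hA, Finset.mem_filter, Finset.mem_univ, true_and]
    constructor
    · -- IsAlt (G τ)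
      intro i hi
      rcases i with _ | i'
      · rw [if_pos rfl, ofB, ofB, Gf_succ, Gf_mk_zero]
        simp only [Fin.lt_def, h_val, Fin.val_mk]
        rw [show ((τ ⟨0, by omega⟩ : Fin (m + 1)) : ℕ)
            = ((τ ⟨0, Nat.succ_pos m⟩ : Fin (m + 1)) : ℕ) from rfl]
        split_ifs <;> omega
      · have key := hAlt i' (by omega)
        rw [ofB, ofB, Gf_succ, Gf_succ]
        rcases Nat.mod_two_eq_zero_or_one i' with hp | hp
        · rw [if_neg (by omega)]
          rw [if_pos hp] at key
          exact (h_lt_h m c hc _ _).mpr key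
        · rw [if_pos (by omega)]
          rw [if_neg (by omega)] at key
          exact (h_lt_h m c hc _ _).mpr key
    · rw [ofB, Gf_mk_zero]
  · -- G ∘ F = id
    intro σ hσ
    simp only [hA, Finset.mem_filter, Finset.mem_univ, true_and] at hσ
    have h0' : ((σ ⟨0, by omega⟩ : Fin (m + 2)) : ℕ) = c := by
      have := hσ.2
      omega
    apply Equiv.ext
    intro x
    rcases x with ⟨xv, hx⟩
    rcases xv with _ | xi
    · rw [ofB, Gf_mk_zero]
      exact Fin.ext (by rw [h0'])
    · rw [ofB, Gf_succ, ofB, Ff_mk]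
      exact h_g m c hc _ (sigma_ne m c σ h0' _ (by simp))
  · -- F ∘ G = id
    intro τ hτ
    apply Equiv.ext
    intro j
    show g m c ((Equiv.ofBijective (Gf m c hc τ) (G_bij m c hc τ)) j.succ) = τ j
    rw [ofB, Gf_succ', g_h m c hc]
end

section
/- The number of alternating permutations of S_{n+1} beginning with n+1 equals the total number of alternating permutations of S_n; that is, E_{n+1,n+1} = E_n. -/
/-- The Euler number `E n`: the number of alternating permutations of `S_n`. -/
noncomputable def eulerNumber (n : ℕ) : ℕ :=
  Nat.card {σ : Equiv.Perm (Fin n) // IsAlt σ}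

namespace EntringerTopAux

def extFun {n : ℕ} (τ : Equiv.Perm (Fin n)) : Fin (n + 1) → Fin (n + 1) :=
  Fin.cases (Fin.last n) (fun j => ((τ j).rev).castSucc)

lemma extFun_injective {n : ℕ} (τ : Equiv.Perm (Fin n)) : Function.Injective (extFun τ) := by
  intro a b hab
  induction a using Fin.cases with
  | zero =>
    induction b using Fin.cases with
    | zero => rfl
    | succ j =>
      simp only [extFun, Fin.cases_zero, Fin.cases_succ] at hab
      exact absurd hab.symm (Fin.castSucc_lt_last _).ne
  | succ i =>
    induction b using Fin.cases with
    | zero =>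
      simp only [extFun, Fin.cases_zero, Fin.cases_succ] at hab
      exact absurd hab (Fin.castSucc_lt_last _).ne
    | succ j =>
      simp only [extFun, Fin.cases_succ] at hab
      have := τ.injective (Fin.rev_injective (Fin.castSucc_injective _ hab))
      rw [this]

noncomputable def ext {n : ℕ} (τ : Equiv.Perm (Fin n)) : Equiv.Perm (Fin (n + 1)) :=
  Equiv.ofBijective (extFun τ) ((Finite.injective_iff_bijective).1 (extFun_injective τ))

lemma ext_zero {n : ℕ} (τ : Equiv.Perm (Fin n)) : ext τ 0 = Fin.last n := rfl

lemma ext_succ {n : ℕ} (τ : Equiv.Perm (Fin n)) (j : Fin n) :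
    ext τ j.succ = ((τ j).rev).castSucc := by
  simp [ext, extFun]

lemma ne_last {n : ℕ} (σ : Equiv.Perm (Fin (n + 1))) (hσ : σ 0 = Fin.last n) (j : Fin n) :
    (σ j.succ : ℕ) < n := by
  have hne : σ j.succ ≠ Fin.last n := by
    intro h
    exact (Fin.succ_ne_zero j) (σ.injective (h.trans hσ.symm))
  have := (σ j.succ).isLt
  have : (σ j.succ : ℕ) ≠ n := fun h => hne (Fin.ext h)
  omega

def resFun {n : ℕ} (σ : Equiv.Perm (Fin (n + 1))) (hσ : σ 0 = Fin.last n) (j : Fin n) : Fin n :=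
  Fin.rev ⟨(σ j.succ : ℕ), ne_last σ hσ j⟩

lemma resFun_injective {n : ℕ} (σ : Equiv.Perm (Fin (n + 1))) (hσ : σ 0 = Fin.last n) :
    Function.Injective (resFun σ hσ) := by
  intro a b hab
  have h1 := Fin.rev_injective hab
  have h2 : (σ a.succ : ℕ) = (σ b.succ : ℕ) := by simpa using h1
  exact Fin.succ_injective _ (σ.injective (Fin.ext h2))

noncomputable def res {n : ℕ} (σ : Equiv.Perm (Fin (n + 1))) (hσ : σ 0 = Fin.last n) :
    Equiv.Perm (Fin n) :=
  Equiv.ofBijective (resFun σ hσ) ((Finite.injective_iff_bijective).1 (resFun_injective σ hσ))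

lemma res_apply {n : ℕ} (σ : Equiv.Perm (Fin (n + 1))) (hσ : σ 0 = Fin.last n) (j : Fin n) :
    res σ hσ j = Fin.rev ⟨(σ j.succ : ℕ), ne_last σ hσ j⟩ := rfl

lemma isAlt_res {n : ℕ} (σ : Equiv.Perm (Fin (n + 1))) (hσ : σ 0 = Fin.last n)
    (hA : IsAlt σ) : IsAlt (res σ hσ) := by
  intro i h
  have h' : (i + 1) + 1 < n + 1 := by omega
  have key := hA (i + 1) h'
  have e1 : (⟨i, Nat.lt_of_succ_lt h⟩ : Fin n).succ = ⟨i + 1, Nat.lt_of_succ_lt h'⟩ := rfl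
  have e2 : (⟨i + 1, h⟩ : Fin n).succ = ⟨i + 2, h'⟩ := rfl
  rw [res_apply, res_apply]
  by_cases hp : i % 2 = 0
  · have hp' : ¬((i + 1) % 2 = 0) := by omega
    rw [if_pos hp]
    rw [if_neg hp'] at key
    rw [Fin.rev_lt_rev, Fin.lt_def]
    exact key
  · have hp' : (i + 1) % 2 = 0 := by omega
    rw [if_neg hp]
    rw [if_pos hp'] at key
    rw [Fin.rev_lt_rev, Fin.lt_def]
    exact key

lemma isAlt_ext {n : ℕ} (τ : Equiv.Perm (Fin n)) (hA : IsAlt τ) : IsAlt (ext τ) := by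
  intro i h
  match i, h with
  | 0, h =>
    simp only [Nat.zero_mod, if_pos]
    have e0 : (⟨0, Nat.lt_of_succ_lt h⟩ : Fin (n + 1)) = 0 := rfl
    have hn : 0 < n := by omega
    have e1 : (⟨1, h⟩ : Fin (n + 1)) = (⟨0, hn⟩ : Fin n).succ := rfl
    rw [e0, e1, ext_zero, ext_succ]
    exact Fin.castSucc_lt_last _
  | (j + 1), h =>
    have hj1 : j < n := by omega
    have hj2 : j + 1 < n := by omega
    have e1 : (⟨j + 1, Nat.lt_of_succ_lt h⟩ : Fin (n + 1)) = (⟨j, hj1⟩ : Fin n).succ := rfl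
    have e2 : (⟨j + 2, h⟩ : Fin (n + 1)) = (⟨j + 1, hj2⟩ : Fin n).succ := rfl
    have key := hA j hj2
    by_cases hp : j % 2 = 0
    · have hp' : ¬((j + 1) % 2 = 0) := by omega
      rw [if_neg hp']
      rw [if_pos hp] at key
      rw [e1, e2, ext_succ, ext_succ, Fin.castSucc_lt_castSucc_iff, Fin.rev_lt_rev]
      exact key
    · have hp' : (j + 1) % 2 = 0 := by omega
      rw [if_pos hp']
      rw [if_neg hp] at key
      rw [e1, e2, ext_succ, ext_succ, Fin.castSucc_lt_castSucc_iff, Fin.rev_lt_rev]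
      exact key

end EntringerTopAux

open EntringerTopAux in
/-- `E_{n+1,n+1} = E_n`. -/
theorem entringer_top (n : ℕ) : entringer (n + 1) (n + 1) = eulerNumber n := by
  rw [entringer, eulerNumber]
  apply Nat.card_congr
  refine
    { toFun := fun σ => ⟨res σ.1 ?_, isAlt_res σ.1 _ σ.2.1⟩
      invFun := fun τ => ⟨ext τ.1, isAlt_ext τ.1 τ.2, ?_⟩
      left_inv := ?_
      right_inv := ?_ }
  · -- σ 0 = last
    have := σ.2.2 (Nat.succ_pos n)
    have h0 : (⟨0, Nat.succ_pos n⟩ : Fin (n + 1)) = 0 := rfl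
    rw [h0] at this
    have hl : ((Fin.last n : Fin (n + 1)) : ℕ) = n := Fin.val_last n
    exact Fin.ext (by omega)
  · intro h
    have h0 : (⟨0, h⟩ : Fin (n + 1)) = 0 := rfl
    rw [h0, ext_zero]
    simp [Fin.last]
  · rintro ⟨σ, hσ⟩
    ext i : 2
    simp only
    induction i using Fin.cases with
    | zero =>
      rw [ext_zero]
      have := hσ.2 (Nat.succ_pos n)
      have h0 : (⟨0, Nat.succ_pos n⟩ : Fin (n + 1)) = 0 := rfl
      rw [h0] at this
      have hl : ((Fin.last n : Fin (n + 1)) : ℕ) = n := Fin.val_last n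
      exact (Fin.ext (by omega)).symm
    | succ j =>
      rw [ext_succ, res_apply, Fin.rev_rev]
      exact Fin.ext rfl
  · rintro ⟨τ, hτ⟩
    ext j : 2
    simp only
    have h1 : ((ext τ j.succ : Fin (n + 1)) : ℕ) = n - 1 - (τ j : ℕ) := by
      rw [ext_succ]
      simp [Fin.val_rev]
      omega
    rw [res_apply]
    apply Fin.ext
    rw [Fin.val_rev]
    simp only [h1]
    have h2 := (τ j).isLt
    omega
end

section
/- The number of 132-avoiding permutations σ ∈ S_n with σ(1) = k equals the sum over i = 1,…,k of the number of 132-avoiding permutations τ ∈ S_{n−1} with τ(1) = i. -/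
/-- A permutation of `Fin n` is 132-avoiding if there are no indices `j < k < l`
with `σ(j) < σ(l) < σ(k)`. -/
def Avoids132 {n : ℕ} (σ : Equiv.Perm (Fin n)) : Prop :=
  ¬ ∃ j k l : Fin n, j < k ∧ k < l ∧ σ j < σ l ∧ σ l < σ k

/-- The ballot number `C n k`: the number of 132-avoiding permutations of `{1,…,n}`
whose first entry is `k` (1-based values). -/
noncomputable def ballot (n k : ℕ) : ℕ :=
  Nat.card {σ : Equiv.Perm (Fin n) // Avoids132 σ ∧ ∀ h : 0 < n, ((σ ⟨0, h⟩ : Fin n) : ℕ) + 1 = k}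

open Equiv Finset

/-- Insert the value `K` at the front of a permutation. -/
private def ins {n : ℕ} (K : Fin (n + 1)) (τ : Perm (Fin n)) : Perm (Fin (n + 1)) :=
  (finSuccEquiv n).trans ((τ.optionCongr).trans (finSuccEquiv' K).symm)

private lemma ins_zero {n : ℕ} (K : Fin (n + 1)) (τ : Perm (Fin n)) : ins K τ 0 = K := by
  simp [ins, finSuccEquiv_zero, finSuccEquiv'_symm_none]

private lemma ins_succ {n : ℕ} (K : Fin (n + 1)) (τ : Perm (Fin n)) (i : Fin n) :
    ins K τ i.succ = K.succAbove (τ i) := by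
  simp [ins, finSuccEquiv_succ, finSuccEquiv'_symm_some]

private lemma coe_succAbove {n : ℕ} (K : Fin (n + 1)) (v : Fin n) :
    (K.succAbove v : ℕ) = if (v : ℕ) < (K : ℕ) then (v : ℕ) else (v : ℕ) + 1 := by
  rcases lt_or_ge ((v : ℕ)) ((K : ℕ)) with h | h
  · rw [Fin.succAbove_of_castSucc_lt _ _ (by simpa [Fin.lt_def] using h)]
    simp [h]
  · rw [Fin.succAbove_of_le_castSucc _ _ (by simpa [Fin.le_def] using h)]
    simp [Fin.val_succ, Nat.not_lt.mpr h]

private lemma optionCongr_removeNone' {α : Type*} (e : Option α ≃ Option α)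
    (h : e none = none) : (Equiv.removeNone e).optionCongr = e := by
  apply Equiv.ext
  intro x
  cases x with
  | none => simp [h]
  | some a =>
    have hx : ∃ b, e (some a) = some b := by
      cases hb : e (some a) with
      | none => exact absurd (e.injective (hb.trans h.symm)) (by simp)
      | some b => exact ⟨b, rfl⟩
    have h2 := Equiv.removeNone_some e hx
    simp only [Equiv.optionCongr_apply, Option.map_some]
    exact h2

private lemma ins_injective {n : ℕ} (K : Fin (n + 1)) : Function.Injective (ins K) := by
  intro τ τ' h
  ext i
  have := congrArg (fun σ : Perm (Fin (n + 1)) => σ i.succ) h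
  simp only [ins_succ] at this
  exact Fin.val_eq_of_eq (Fin.succAbove_right_injective this)

private lemma ins_surj {n : ℕ} (K : Fin (n + 1)) (σ : Perm (Fin (n + 1))) (h0 : σ 0 = K) :
    ∃ τ, ins K τ = σ := by
  set e : Option (Fin n) ≃ Option (Fin n) :=
    ((finSuccEquiv n).symm.trans σ).trans (finSuccEquiv' K) with he
  have hnone : e none = none := by
    simp [he, finSuccEquiv_symm_none, h0, finSuccEquiv'_at]
  refine ⟨Equiv.removeNone e, ?_⟩
  ext x
  have : (Equiv.removeNone e).optionCongr = e := optionCongr_removeNone' e hnone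
  simp [ins, this, he, h0, finSuccEquiv'_at]

/-- `ins K τ` avoids 132 iff `τ` does and `τ 0 ≤ K`. -/
private lemma ins_avoids_iff {m : ℕ} (K : Fin (m + 2)) (τ : Perm (Fin (m + 1))) :
    Avoids132 (ins K τ) ↔ (Avoids132 τ ∧ (τ 0 : ℕ) ≤ (K : ℕ)) := by
  constructor
  · intro h
    constructor
    · rintro ⟨j, k, l, hjk, hkl, h1, h2⟩
      refine h ⟨j.succ, k.succ, l.succ, by simpa using hjk, by simpa using hkl, ?_, ?_⟩
      · rw [ins_succ, ins_succ]; exact (Fin.succAbove_lt_succAbove_iff).2 h1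
      · rw [ins_succ, ins_succ]; exact (Fin.succAbove_lt_succAbove_iff).2 h2
    · by_contra hlt
      push_neg at hlt
      have hKm : (K : ℕ) < m + 1 := by have := (τ 0).isLt; omega
      set v : Fin (m + 1) := ⟨(K : ℕ), hKm⟩ with hv
      set q : Fin (m + 1) := τ.symm v with hq
      have hτq : τ q = v := τ.apply_symm_apply v
      have hq0 : q ≠ 0 := by
        intro hq0
        rw [hq0] at hτq
        have : (τ 0 : ℕ) = (K : ℕ) := by rw [hτq]
        omega
      refine h ⟨0, (0 : Fin (m + 1)).succ, q.succ, ?_, ?_, ?_, ?_⟩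
      · simp [Fin.lt_def]
      · have : 0 < (q : ℕ) := Nat.pos_of_ne_zero (fun hc => hq0 (Fin.ext hc))
        simp [Fin.lt_def, this]
      · have h3 : (K.succAbove v : ℕ) = (K : ℕ) + 1 := by
          rw [coe_succAbove]; simp [hv]
        rw [ins_zero, ins_succ, hτq, Fin.lt_def, h3]
        omega
      · have h3 : (K.succAbove v : ℕ) = (K : ℕ) + 1 := by
          rw [coe_succAbove]; simp [hv]
        have h4 : (K.succAbove (τ 0) : ℕ) = (τ 0 : ℕ) + 1 := by
          rw [coe_succAbove, if_neg (by omega)]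
        rw [ins_succ, ins_succ, hτq, Fin.lt_def, h3, h4]
        omega
  · rintro ⟨hτ, h0⟩ ⟨j, k, l, hjk, hkl, h1, h2⟩
    have hk0 : k ≠ 0 := fun hc => by simp [hc, Fin.lt_def] at hjk
    have hl0 : l ≠ 0 := fun hc => by
      rw [hc] at hkl
      exact absurd hkl (by simp [Fin.lt_def])
    obtain ⟨k', rfl⟩ := Fin.exists_succ_eq_of_ne_zero hk0
    obtain ⟨l', rfl⟩ := Fin.exists_succ_eq_of_ne_zero hl0
    rcases eq_or_ne j 0 with rfl | hj0
    · rw [ins_zero, ins_succ] at h1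
      rw [ins_succ, ins_succ] at h2
      have hlk : τ l' < τ k' := (Fin.succAbove_lt_succAbove_iff).1 h2
      have hKl : (K : ℕ) ≤ (τ l' : ℕ) := by
        rw [Fin.lt_def, coe_succAbove] at h1
        by_contra hc
        push_neg at hc
        rw [if_pos hc] at h1
        omega
      have hk'0 : k' ≠ 0 := by
        intro hc
        rw [hc] at hlk
        have : (τ l' : ℕ) < (τ 0 : ℕ) := hlk
        omega
      have hl'τ : (τ 0 : ℕ) < (τ l' : ℕ) := by
        have hne : τ 0 ≠ τ l' := by
          intro hc
          have h0l : (0 : Fin (m + 1)) = l' := τ.injective hc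
          have hv1 : (k' : ℕ) < (l' : ℕ) := by
            have := Fin.lt_def.1 hkl; simpa using this
          have hv2 := congrArg Fin.val h0l
          simp at hv2
          omega
        have : (τ 0 : ℕ) ≠ (τ l' : ℕ) := fun hc => hne (Fin.ext hc)
        omega
      exact hτ ⟨0, k', l', Fin.pos_iff_ne_zero.2 hk'0, by simpa using hkl,
        Fin.lt_def.2 hl'τ, hlk⟩
    · obtain ⟨j', rfl⟩ := Fin.exists_succ_eq_of_ne_zero hj0
      rw [ins_succ, ins_succ] at h1 h2
      exact hτ ⟨j', k', l', by simpa using hjk, by simpa using hkl,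
        (Fin.succAbove_lt_succAbove_iff).1 h1, (Fin.succAbove_lt_succAbove_iff).1 h2⟩

private lemma card_eq {m : ℕ} (K : Fin (m + 2)) :
    Nat.card {σ : Perm (Fin (m + 2)) // Avoids132 σ ∧ σ 0 = K}
      = Nat.card {τ : Perm (Fin (m + 1)) // Avoids132 τ ∧ (τ 0 : ℕ) ≤ (K : ℕ)} := by
  refine (Nat.card_congr (Equiv.ofBijective
    (fun τ : {τ : Perm (Fin (m + 1)) // Avoids132 τ ∧ (τ 0 : ℕ) ≤ (K : ℕ)} =>
      (⟨ins K τ.1, ((ins_avoids_iff K τ.1).2 τ.2), ins_zero K τ.1⟩ :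
        {σ : Perm (Fin (m + 2)) // Avoids132 σ ∧ σ 0 = K}) )
    ⟨?_, ?_⟩)).symm
  · intro a b hab
    exact Subtype.ext (ins_injective K (congrArg Subtype.val hab))
  · rintro ⟨σ, hσ, h0⟩
    obtain ⟨τ, hτ⟩ := ins_surj K σ h0
    have := (ins_avoids_iff K τ).1 (hτ ▸ hσ)
    exact ⟨⟨τ, this⟩, Subtype.ext hτ⟩

/-- `C_{n,k} = ∑_{i=1}^{k} C_{n-1,i}`. -/
theorem ballot_recurrence (n k : ℕ) (hn : 2 ≤ n) (hk1 : 1 ≤ k) (hkn : k ≤ n) :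
    ballot n k = ∑ i ∈ Finset.Icc 1 k, ballot (n - 1) i := by
  classical
  obtain ⟨m, rfl⟩ : ∃ m, n = m + 2 := ⟨n - 2, by omega⟩
  have hm1 : m + 2 - 1 = m + 1 := rfl
  rw [hm1]
  set K : Fin (m + 2) := ⟨k - 1, by omega⟩ with hK
  -- rewrite LHS
  have hL : ballot (m + 2) k
      = Nat.card {σ : Perm (Fin (m + 2)) // Avoids132 σ ∧ σ 0 = K} := by
    unfold ballot
    apply Nat.card_congr
    apply Equiv.subtypeEquivRight
    intro σ
    constructor
    · rintro ⟨h1, h2⟩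
      refine ⟨h1, ?_⟩
      have := h2 (by omega)
      have h0 : (⟨0, by omega⟩ : Fin (m + 2)) = 0 := rfl
      rw [h0] at this
      exact Fin.ext (by simp [hK]; omega)
    · rintro ⟨h1, h2⟩
      refine ⟨h1, fun h => ?_⟩
      have h0 : (⟨0, h⟩ : Fin (m + 2)) = 0 := rfl
      rw [h0, h2]
      simp [hK]; omega
  rw [hL, card_eq K]
  -- rewrite each ballot on the RHS
  have hR : ∀ i, ballot (m + 1) i
      = Nat.card {τ : Perm (Fin (m + 1)) // Avoids132 τ ∧ (τ 0 : ℕ) + 1 = i} := by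
    intro i
    unfold ballot
    apply Nat.card_congr
    apply Equiv.subtypeEquivRight
    intro τ
    constructor
    · rintro ⟨h1, h2⟩
      exact ⟨h1, by simpa using h2 (by omega)⟩
    · rintro ⟨h1, h2⟩
      exact ⟨h1, fun h => by simpa using h2⟩
  simp only [hR]
  -- now a counting identity over finsets
  have hcond : ∀ τ : Perm (Fin (m + 1)), ((τ 0 : ℕ) ≤ (K : ℕ) ↔ (τ 0 : ℕ) + 1 ≤ k) := by
    intro τ
    simp only [hK]
    omega
  simp only [Nat.card_eq_fintype_card, Fintype.card_subtype]
  have := Finset.card_eq_sum_card_fiberwise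
    (f := fun τ : Perm (Fin (m + 1)) => (τ 0 : ℕ) + 1)
    (s := Finset.univ.filter fun τ => Avoids132 τ ∧ (τ 0 : ℕ) ≤ (K : ℕ))
    (t := Finset.Icc 1 k)
    (by
      intro τ hτ
      simp only [Finset.mem_coe, Finset.mem_filter] at hτ
      simp only [Finset.mem_coe, Finset.mem_Icc]
      have := (hcond τ).1 hτ.2.2
      omega)
  rw [this]
  apply Finset.sum_congr rfl
  intro i hi
  simp only [Finset.mem_Icc] at hi
  congr 1
  rw [Finset.filter_filter]
  apply Finset.filter_congr
  intro τ _
  constructor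
  · rintro ⟨⟨h1, _⟩, h2⟩; exact ⟨h1, h2⟩
  · rintro ⟨h1, h2⟩
    exact ⟨⟨h1, (hcond τ).2 (by omega)⟩, h2⟩
end

section
/- The ballot numbers satisfy C_{n,k} = C_{n,k−1} + C_{n−1,k} for 2 ≤ k ≤ n−1. -/
lemma bp_swap_val {n : ℕ} (b a z : Fin n) :
    ((Equiv.swap b a z : Fin n) : ℕ) =
      if (z : ℕ) = (b : ℕ) then (a : ℕ) else if (z : ℕ) = (a : ℕ) then (b : ℕ) else (z : ℕ) := by
  rcases eq_or_ne z b with rfl | h1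
  · simp
  · rcases eq_or_ne z a with rfl | h2
    · rw [Equiv.swap_apply_right, if_neg (by simpa [Fin.ext_iff] using h1)]
      simp
    · rw [Equiv.swap_apply_of_ne_of_ne h1 h2,
        if_neg (by simpa [Fin.ext_iff] using h1), if_neg (by simpa [Fin.ext_iff] using h2)]

lemma bp_swap_lt {n : ℕ} {b a x y : Fin n} (hba : (b : ℕ) + 1 = (a : ℕ)) (hxy : x < y)
    (hbad : ¬(x = b ∧ y = a)) : Equiv.swap b a x < Equiv.swap b a y := by
  have hbad' : ¬((x : ℕ) = (b : ℕ) ∧ (y : ℕ) = (a : ℕ)) := by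
    simpa [Fin.ext_iff] using hbad
  rw [Fin.lt_def] at hxy ⊢
  rw [bp_swap_val, bp_swap_val]
  split_ifs <;> omega

lemma bp_succAbove_val {m : ℕ} (p : Fin (m + 1)) (i : Fin m) :
    ((p.succAbove i : Fin (m + 1)) : ℕ) = if (i : ℕ) < (p : ℕ) then (i : ℕ) else (i : ℕ) + 1 := by
  rcases lt_or_ge (Fin.castSucc i) p with h | h
  · have hv : (i : ℕ) < (p : ℕ) := by simpa [Fin.lt_def] using h
    rw [Fin.succAbove_of_castSucc_lt _ _ h, if_pos hv, Fin.coe_castSucc]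
  · have hv : ¬ (i : ℕ) < (p : ℕ) := by
      simp only [Fin.le_def, Fin.coe_castSucc] at h; omega
    rw [Fin.succAbove_of_le_castSucc _ _ h, if_neg hv, Fin.val_succ]

lemma bp_perm_eq_of_val_eq {n : ℕ} (σ : Equiv.Perm (Fin n)) {p q : Fin n}
    (h : ((σ p : Fin n) : ℕ) = ((σ q : Fin n) : ℕ)) : p = q := σ.injective (Fin.ext h)

lemma bp_optionCongr_removeNone {α β : Type*} (f : Option α ≃ Option β) (h : f none = none) :
    Equiv.optionCongr (Equiv.removeNone f) = f := by
  apply Equiv.ext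
  intro x
  cases x with
  | none => simpa using h.symm
  | some a =>
    obtain ⟨y, hy⟩ : ∃ y, f (some a) = some y := by
      rcases ho : f (some a) with _ | y
      · exact absurd (f.injective (ho.trans h.symm)) (by simp)
      · exact ⟨y, rfl⟩
    simpa using Equiv.removeNone_some f ⟨y, hy⟩

noncomputable def bpDel {m : ℕ} (p v : Fin (m + 1)) (σ : Equiv.Perm (Fin (m + 1))) :
    Equiv.Perm (Fin m) :=
  Equiv.removeNone ((finSuccEquiv' p).symm.trans (σ.trans (finSuccEquiv' v)))

def bpIns {m : ℕ} (p v : Fin (m + 1)) (τ : Equiv.Perm (Fin m)) :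
    Equiv.Perm (Fin (m + 1)) :=
  (finSuccEquiv' p).trans ((Equiv.optionCongr τ).trans (finSuccEquiv' v).symm)

lemma bpIns_p {m : ℕ} (p v : Fin (m + 1)) (τ : Equiv.Perm (Fin m)) : bpIns p v τ p = v := by
  simp [bpIns, finSuccEquiv'_at, finSuccEquiv'_symm_none]

lemma bpIns_rel {m : ℕ} (p v : Fin (m + 1)) (τ : Equiv.Perm (Fin m)) (i : Fin m) :
    bpIns p v τ (p.succAbove i) = v.succAbove (τ i) := by
  simp [bpIns, finSuccEquiv'_succAbove, finSuccEquiv'_symm_some]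

lemma bpIns_del {m : ℕ} (p v : Fin (m + 1)) (σ : Equiv.Perm (Fin (m + 1))) (h : σ p = v) :
    bpIns p v (bpDel p v σ) = σ := by
  have hf : ((finSuccEquiv' p).symm.trans (σ.trans (finSuccEquiv' v))) none = none := by
    simp [finSuccEquiv'_symm_none, h, finSuccEquiv'_at]
  unfold bpIns bpDel
  rw [bp_optionCongr_removeNone _ hf]
  apply Equiv.ext
  intro x
  simp

lemma bpDel_ins {m : ℕ} (p v : Fin (m + 1)) (τ : Equiv.Perm (Fin m)) :
    bpDel p v (bpIns p v τ) = τ := by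
  unfold bpDel bpIns
  have : (finSuccEquiv' p).symm.trans
      (((finSuccEquiv' p).trans ((Equiv.optionCongr τ).trans (finSuccEquiv' v).symm)).trans
        (finSuccEquiv' v)) = Equiv.optionCongr τ := by
    apply Equiv.ext; intro x; simp
  rw [this, Equiv.removeNone_optionCongr]

lemma bpDel_rel {m : ℕ} (p v : Fin (m + 1)) (σ : Equiv.Perm (Fin (m + 1))) (h : σ p = v)
    (i : Fin m) : σ (p.succAbove i) = v.succAbove (bpDel p v σ i) := by
  conv_lhs => rw [← bpIns_del p v σ h]
  rw [bpIns_rel]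

/-- Deleting preserves 132-avoidance. -/
lemma bp_avoidDel {m : ℕ} (p v : Fin (m + 1)) (σ : Equiv.Perm (Fin (m + 1)))
    (τ : Equiv.Perm (Fin m))
    (hrel : ∀ i, σ (p.succAbove i) = v.succAbove (τ i)) (hav : Avoids132 σ) : Avoids132 τ := by
  rintro ⟨j, c, l, h1, h2, h3, h4⟩
  refine hav ⟨p.succAbove j, p.succAbove c, p.succAbove l, ?_, ?_, ?_, ?_⟩
  · rw [Fin.lt_def, bp_succAbove_val, bp_succAbove_val]
    rw [Fin.lt_def] at h1; split_ifs <;> omega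
  · rw [Fin.lt_def, bp_succAbove_val, bp_succAbove_val]
    rw [Fin.lt_def] at h2; split_ifs <;> omega
  · rw [hrel, hrel, Fin.lt_def, bp_succAbove_val, bp_succAbove_val]
    rw [Fin.lt_def] at h3; split_ifs <;> omega
  · rw [hrel, hrel, Fin.lt_def, bp_succAbove_val, bp_succAbove_val]
    rw [Fin.lt_def] at h4; split_ifs <;> omega

/-- Inserting the value `k` at position 1, in front of a 132-avoiding permutation starting
with `k-1`, preserves 132-avoidance. -/
lemma bp_avoidIns {m k : ℕ} (hm : 2 ≤ m) (hk2 : 2 ≤ k) (hkm : k ≤ m)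
    (p v : Fin (m + 1)) (hp : (p : ℕ) = 1) (hv : (v : ℕ) = k)
    (σ : Equiv.Perm (Fin (m + 1))) (τ : Equiv.Perm (Fin m))
    (hrel : ∀ i, σ (p.succAbove i) = v.succAbove (τ i)) (hσp : σ p = v)
    (hav : Avoids132 τ) (hτ0 : ((τ ⟨0, by omega⟩ : Fin m) : ℕ) = k - 1) : Avoids132 σ := by
  rintro ⟨j, c, l, hjc, hcl, hv1, hv2⟩
  rw [Fin.lt_def] at hjc hcl hv1 hv2
  by_cases hlp : l = p
  · -- j < c < l = p : impossible since p = 1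
    rw [hlp, hp] at hcl; omega
  obtain ⟨il, hil⟩ := Fin.exists_succAbove_eq hlp
  by_cases hcp : c = p
  · -- middle position is p, value v = k ; j must be position 0 with value k-1
    have hj0 : (j : ℕ) = 0 := by rw [hcp, hp] at hjc; omega
    have hj : p.succAbove ⟨0, by omega⟩ = j := by
      apply Fin.ext; rw [bp_succAbove_val]; simp [hp, hj0]
    have e1 : ((σ j : Fin (m+1)) : ℕ) = k - 1 := by
      rw [← hj, hrel, bp_succAbove_val, hτ0, hv, if_pos (by omega)]
    rw [hcp, hσp] at hv2
    -- k - 1 < σ l < k : absurd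
    have e2 : ((σ l : Fin (m+1)) : ℕ) < k := by omega
    omega
  obtain ⟨ic, hic⟩ := Fin.exists_succAbove_eq hcp
  by_cases hjp : j = p
  · -- first position is p, value v = k; get a 132 pattern (0, ic, il) in τ
    rw [hjp, hσp] at hv1
    rw [← hil, hrel, bp_succAbove_val] at hv1
    rw [← hil, hrel, bp_succAbove_val, ← hic, hrel, bp_succAbove_val] at hv2
    refine hav ⟨⟨0, by omega⟩, ic, il, ?_, ?_, ?_, ?_⟩
    · -- 0 < ic
      rw [Fin.lt_def]
      have : (p : ℕ) < ((p.succAbove ic : Fin (m+1)) : ℕ) := by rw [hic, ← hjp]; exact hjc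
      rw [bp_succAbove_val] at this
      simp only [hp] at this ⊢
      split_ifs at this <;> omega
    · -- ic < il
      rw [Fin.lt_def]
      have : ((p.succAbove ic : Fin (m+1)) : ℕ) < ((p.succAbove il : Fin (m+1)) : ℕ) := by
        rw [hic, hil]; exact hcl
      rw [bp_succAbove_val, bp_succAbove_val] at this
      split_ifs at this <;> omega
    · -- τ 0 < τ il
      rw [Fin.lt_def, hτ0, hv] at *
      split_ifs at hv1 <;> omega
    · -- τ il < τ ic
      rw [Fin.lt_def]
      rw [hv] at hv1 hv2
      split_ifs at hv1 hv2 <;> omega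
  obtain ⟨ij, hij⟩ := Fin.exists_succAbove_eq hjp
  -- none of the positions is p : transfer the pattern to τ
  rw [← hij, hrel, bp_succAbove_val, ← hil, hrel, bp_succAbove_val] at hv1
  rw [← hil, hrel, bp_succAbove_val, ← hic, hrel, bp_succAbove_val] at hv2
  have pjc : ((p.succAbove ij : Fin (m+1)) : ℕ) < ((p.succAbove ic : Fin (m+1)) : ℕ) := by
    rw [hij, hic]; exact hjc
  have pcl : ((p.succAbove ic : Fin (m+1)) : ℕ) < ((p.succAbove il : Fin (m+1)) : ℕ) := by
    rw [hic, hil]; exact hcl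
  rw [bp_succAbove_val, bp_succAbove_val] at pjc pcl
  refine hav ⟨ij, ic, il, ?_, ?_, ?_, ?_⟩ <;> rw [Fin.lt_def]
  · split_ifs at pjc <;> omega
  · split_ifs at pcl <;> omega
  · split_ifs at hv1 <;> omega
  · split_ifs at hv2 <;> omega

/-- In a 132-avoiding permutation starting with `k-1` (0-based) whose second entry is not `k`,
no entry before the entry with value `k-2` (apart from the first) has value `≥ k-1`. -/
lemma bp_noBig {n k : ℕ} (hk : 2 ≤ k) (hkn : k < n) (σ : Equiv.Perm (Fin n))
    {z0 z1 : Fin n} (hz0 : (z0 : ℕ) = 0) (hz1 : (z1 : ℕ) = 1)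
    (hav : Avoids132 σ)
    (h0 : ((σ z0 : Fin n) : ℕ) = k - 1) (h1 : ((σ z1 : Fin n) : ℕ) ≠ k)
    {p q : Fin n} (hp : 0 < (p : ℕ)) (hpq : p < q) (hq : ((σ q : Fin n) : ℕ) = k - 2) :
    ((σ p : Fin n) : ℕ) < k - 1 := by
  rw [Fin.lt_def] at hpq
  by_contra hge
  push_neg at hge
  have hne0 : ((σ p : Fin n) : ℕ) ≠ k - 1 := fun h => by
    have := bp_perm_eq_of_val_eq σ (h.trans h0.symm)
    rw [Fin.ext_iff, hz0] at this; omega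
  have hpk : k ≤ ((σ p : Fin n) : ℕ) := by omega
  set t := σ.symm ⟨k, hkn⟩ with ht
  have hσt : σ t = ⟨k, hkn⟩ := σ.apply_symm_apply _
  have hσtv : ((σ t : Fin n) : ℕ) = k := by rw [hσt]
  have ht0 : (t : ℕ) ≠ 0 := fun h => by
    have : t = z0 := Fin.ext (by omega)
    rw [this, h0] at hσtv; omega
  have ht1 : (t : ℕ) ≠ 1 := fun h => by
    have : t = z1 := Fin.ext (by omega)
    rw [this] at hσtv; exact h1 hσtv
  rcases lt_or_ge ((σ z1 : Fin n) : ℕ) (k - 1) with hs1 | hs1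
  · -- second entry is small : pattern (z1, p, q)
    have hp1 : (p : ℕ) ≠ 1 := fun h => by
      have : p = z1 := Fin.ext (by omega)
      rw [this] at hpk; omega
    have hs1q : ((σ z1 : Fin n) : ℕ) ≠ k - 2 := fun h => by
      have := bp_perm_eq_of_val_eq σ (h.trans hq.symm)
      rw [Fin.ext_iff, hz1] at this; omega
    exact hav ⟨z1, p, q, by rw [Fin.lt_def]; omega, by rw [Fin.lt_def]; omega,
      by rw [Fin.lt_def]; omega, by rw [Fin.lt_def]; omega⟩
  · -- second entry is ≥ k-1, hence > k : pattern (z0, z1, t)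
    have hs10 : ((σ z1 : Fin n) : ℕ) ≠ k - 1 := fun h => by
      have := bp_perm_eq_of_val_eq σ (h.trans h0.symm)
      rw [Fin.ext_iff, hz0, hz1] at this; omega
    have hs1k : k < ((σ z1 : Fin n) : ℕ) := by omega
    exact hav ⟨z0, z1, t, by rw [Fin.lt_def]; omega, by rw [Fin.lt_def]; omega,
      by rw [Fin.lt_def]; omega, by rw [Fin.lt_def]; omega⟩

/-- Swapping the values `k-2`, `k-1` in a 132-avoiding permutation starting with `k-1`
whose second value is not `k` preserves avoidance. -/
lemma bp_avoidC {n k : ℕ} (hk : 2 ≤ k) (hkn : k < n) (σ : Equiv.Perm (Fin n))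
    {z0 z1 b a : Fin n} (hz0 : (z0 : ℕ) = 0) (hz1 : (z1 : ℕ) = 1)
    (hb : (b : ℕ) = k - 2) (ha : (a : ℕ) = k - 1)
    (hav : Avoids132 σ)
    (h0 : ((σ z0 : Fin n) : ℕ) = k - 1) (h1 : ((σ z1 : Fin n) : ℕ) ≠ k) :
    Avoids132 (σ.trans (Equiv.swap b a)) := by
  have hba : (b : ℕ) + 1 = (a : ℕ) := by omega
  rintro ⟨j, c, l, hjc, hcl, hv1, hv2⟩
  simp only [Equiv.trans_apply] at hv1 hv2
  by_cases hb1 : σ j = a ∧ σ l = b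
  · obtain ⟨hja, hlb⟩ := hb1
    have hj0 : j = z0 := bp_perm_eq_of_val_eq σ (by rw [hja, ha, h0])
    have hc0 : 0 < (c : ℕ) := by
      rw [Fin.lt_def, hj0, hz0] at hjc; omega
    have hσc : k - 1 < ((σ c : Fin n) : ℕ) := by
      rw [hlb, Equiv.swap_apply_left, Fin.lt_def] at hv2
      rw [bp_swap_val] at hv2
      split_ifs at hv2 <;> omega
    have := bp_noBig hk hkn σ hz0 hz1 hav h0 h1 hc0 hcl (by rw [hlb, hb])
    omega
  · have p1 : σ j < σ l := by
      have h' : ¬(Equiv.swap b a (σ j) = b ∧ Equiv.swap b a (σ l) = a) := by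
        rintro ⟨e1, e2⟩
        refine hb1 ⟨?_, ?_⟩
        · rw [← Equiv.swap_apply_self b a (σ j), e1, Equiv.swap_apply_left]
        · rw [← Equiv.swap_apply_self b a (σ l), e2, Equiv.swap_apply_right]
      simpa [Equiv.swap_apply_self] using bp_swap_lt hba hv1 h'
    have p2 : σ l < σ c := by
      have h' : ¬(Equiv.swap b a (σ l) = b ∧ Equiv.swap b a (σ c) = a) := by
        rintro ⟨e1, e2⟩
        have hla : σ l = a := by
          rw [← Equiv.swap_apply_self b a (σ l), e1, Equiv.swap_apply_left]
        have : l = z0 := bp_perm_eq_of_val_eq σ (by rw [hla, ha, h0])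
        rw [Fin.lt_def, this, hz0] at hcl
        rw [Fin.lt_def] at hjc; omega
      simpa [Equiv.swap_apply_self] using bp_swap_lt hba hv2 h'
    exact hav ⟨j, c, l, hjc, hcl, p1, p2⟩

/-- Swapping the values `k-2`, `k-1` in a 132-avoiding permutation starting with `k-2`
preserves avoidance. -/
lemma bp_avoidD {n k : ℕ} (hk : 2 ≤ k) (σ : Equiv.Perm (Fin n))
    {z0 b a : Fin n} (hz0 : (z0 : ℕ) = 0)
    (hb : (b : ℕ) = k - 2) (ha : (a : ℕ) = k - 1)
    (hav : Avoids132 σ) (h0 : ((σ z0 : Fin n) : ℕ) = k - 2) :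
    Avoids132 (σ.trans (Equiv.swap b a)) := by
  have hba : (b : ℕ) + 1 = (a : ℕ) := by omega
  rintro ⟨j, c, l, hjc, hcl, hv1, hv2⟩
  simp only [Equiv.trans_apply] at hv1 hv2
  have p1 : σ j < σ l := by
    have h' : ¬(Equiv.swap b a (σ j) = b ∧ Equiv.swap b a (σ l) = a) := by
      rintro ⟨e1, e2⟩
      have hlb : σ l = b := by
        rw [← Equiv.swap_apply_self b a (σ l), e2, Equiv.swap_apply_right]
      have : l = z0 := bp_perm_eq_of_val_eq σ (by rw [hlb, hb, h0])
      rw [Fin.lt_def, this, hz0] at hcl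
      rw [Fin.lt_def] at hjc; omega
    simpa [Equiv.swap_apply_self] using bp_swap_lt hba hv1 h'
  have p2 : σ l < σ c := by
    have h' : ¬(Equiv.swap b a (σ l) = b ∧ Equiv.swap b a (σ c) = a) := by
      rintro ⟨e1, e2⟩
      have hcb : σ c = b := by
        rw [← Equiv.swap_apply_self b a (σ c), e2, Equiv.swap_apply_right]
      have : c = z0 := bp_perm_eq_of_val_eq σ (by rw [hcb, hb, h0])
      rw [Fin.lt_def, this, hz0] at hjc; omega
    simpa [Equiv.swap_apply_self] using bp_swap_lt hba hv2 h'
  exact hav ⟨j, c, l, hjc, hcl, p1, p2⟩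

/-- bijection between avoiders with first entry `k`, second entry `k+1`, and avoiders of
`Fin m` with first entry `k`. -/
noncomputable def bp_equivY {m k : ℕ} (hm : 2 ≤ m) (hk2 : 2 ≤ k) (hkm : k ≤ m) :
    {σ : Equiv.Perm (Fin (m + 1)) //
        (Avoids132 σ ∧ ∀ h : 0 < m + 1, ((σ ⟨0, h⟩ : Fin (m + 1)) : ℕ) + 1 = k) ∧
          σ ⟨1, by omega⟩ = ⟨k, by omega⟩} ≃
      {τ : Equiv.Perm (Fin m) //
        Avoids132 τ ∧ ∀ h : 0 < m, ((τ ⟨0, h⟩ : Fin m) : ℕ) + 1 = k} := by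
  have h1m : 1 < m + 1 := by omega
  have hkm1 : k < m + 1 := by omega
  have h0m : 0 < m := by omega
  refine
    { toFun := fun x => ⟨bpDel ⟨1, h1m⟩ ⟨k, hkm1⟩ x.1, ?_, ?_⟩
      invFun := fun y => ⟨bpIns ⟨1, h1m⟩ ⟨k, hkm1⟩ y.1, ⟨?_, ?_⟩, ?_⟩
      left_inv := fun x => Subtype.ext (bpIns_del _ _ x.1 x.2.2)
      right_inv := fun y => Subtype.ext (bpDel_ins _ _ y.1) }
  · exact bp_avoidDel _ _ x.1 _ (bpDel_rel _ _ x.1 x.2.2) x.2.1.1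
  · intro h
    have h01 : 0 < m + 1 := by omega
    have hx0 := x.2.1.2 h01
    have hr := bpDel_rel ⟨1, h1m⟩ ⟨k, hkm1⟩ x.1 x.2.2 ⟨0, h⟩
    have hpos : (⟨1, h1m⟩ : Fin (m + 1)).succAbove ⟨0, h⟩ = (⟨0, h01⟩ : Fin (m + 1)) := by
      apply Fin.ext; rw [bp_succAbove_val]; simp
    rw [hpos] at hr
    rw [hr, bp_succAbove_val] at hx0
    have hvv : ((⟨k, hkm1⟩ : Fin (m + 1)) : ℕ) = k := rfl
    rw [hvv] at hx0
    split_ifs at hx0 <;> omega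
  · exact bp_avoidIns hm hk2 hkm ⟨1, h1m⟩ ⟨k, hkm1⟩ rfl rfl _ y.1 (bpIns_rel _ _ y.1)
      (bpIns_p _ _ y.1) y.2.1 (by have := y.2.2 h0m; omega)
  · intro h
    have hy0 := y.2.2 h0m
    have hr := bpIns_rel ⟨1, h1m⟩ ⟨k, hkm1⟩ y.1 ⟨0, h0m⟩
    have hpos : (⟨1, h1m⟩ : Fin (m + 1)).succAbove ⟨0, h0m⟩ = (⟨0, h⟩ : Fin (m + 1)) := by
      apply Fin.ext; rw [bp_succAbove_val]; simp
    rw [hpos] at hr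
    rw [hr, bp_succAbove_val]
    have hvv : ((⟨k, hkm1⟩ : Fin (m + 1)) : ℕ) = k := rfl
    rw [hvv]
    split_ifs <;> omega
  · exact bpIns_p _ _ y.1

/-- bijection between avoiders with first entry `k`, second entry not `k+1`, and avoiders
with first entry `k-1`, by swapping the values `k-1` and `k-2` (0-based). -/
def bp_equivX {m k : ℕ} (hm : 2 ≤ m) (hk2 : 2 ≤ k) (hkm : k ≤ m) :
    {σ : Equiv.Perm (Fin (m + 1)) //
        (Avoids132 σ ∧ ∀ h : 0 < m + 1, ((σ ⟨0, h⟩ : Fin (m + 1)) : ℕ) + 1 = k) ∧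
          ¬ σ ⟨1, by omega⟩ = ⟨k, by omega⟩} ≃
      {σ : Equiv.Perm (Fin (m + 1)) //
        Avoids132 σ ∧ ∀ h : 0 < m + 1, ((σ ⟨0, h⟩ : Fin (m + 1)) : ℕ) + 1 = k - 1} := by
  have h1m : 1 < m + 1 := by omega
  have hkm1 : k < m + 1 := by omega
  have h01 : 0 < m + 1 := by omega
  have hb : k - 2 < m + 1 := by omega
  have ha : k - 1 < m + 1 := by omega
  refine
    { toFun := fun x => ⟨x.1.trans (Equiv.swap ⟨k - 2, hb⟩ ⟨k - 1, ha⟩), ?_, ?_⟩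
      invFun := fun y => ⟨y.1.trans (Equiv.swap ⟨k - 2, hb⟩ ⟨k - 1, ha⟩), ⟨?_, ?_⟩, ?_⟩
      left_inv := fun x => Subtype.ext (by
        apply Equiv.ext; intro z
        simp [Equiv.swap_apply_self])
      right_inv := fun y => Subtype.ext (by
        apply Equiv.ext; intro z
        simp [Equiv.swap_apply_self]) }
  · refine bp_avoidC hk2 hkm1 x.1 (z0 := ⟨0, h01⟩) (z1 := ⟨1, h1m⟩) rfl rfl rfl rfl x.2.1.1
      (by have := x.2.1.2 h01; omega) ?_
    intro hval
    exact x.2.2 (Fin.ext hval)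
  · intro h
    have hx := x.2.1.2 h
    have hv := bp_swap_val (⟨k - 2, hb⟩ : Fin (m + 1)) ⟨k - 1, ha⟩ (x.1 ⟨0, h⟩)
    show ((Equiv.swap (⟨k - 2, hb⟩ : Fin (m + 1)) ⟨k - 1, ha⟩ (x.1 ⟨0, h⟩) : Fin (m + 1)) : ℕ)
        + 1 = k - 1
    rw [hv]
    have e1 : ((⟨k - 2, hb⟩ : Fin (m + 1)) : ℕ) = k - 2 := rfl
    have e2 : ((⟨k - 1, ha⟩ : Fin (m + 1)) : ℕ) = k - 1 := rfl
    rw [e1, e2]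
    split_ifs <;> omega
  · exact bp_avoidD hk2 y.1 (z0 := ⟨0, h01⟩) rfl rfl rfl y.2.1
      (by have := y.2.2 h01; omega)
  · intro h
    have hy := y.2.2 h
    have hv := bp_swap_val (⟨k - 2, hb⟩ : Fin (m + 1)) ⟨k - 1, ha⟩ (y.1 ⟨0, h⟩)
    show ((Equiv.swap (⟨k - 2, hb⟩ : Fin (m + 1)) ⟨k - 1, ha⟩ (y.1 ⟨0, h⟩) : Fin (m + 1)) : ℕ)
        + 1 = k
    rw [hv]
    have e1 : ((⟨k - 2, hb⟩ : Fin (m + 1)) : ℕ) = k - 2 := rfl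
    have e2 : ((⟨k - 1, ha⟩ : Fin (m + 1)) : ℕ) = k - 1 := rfl
    rw [e1, e2]
    split_ifs <;> omega
  · intro hbad
    have hyz1 : y.1 ⟨1, h1m⟩ = ⟨k, hkm1⟩ := by
      have h2 := congrArg (Equiv.swap (⟨k - 2, hb⟩ : Fin (m + 1)) ⟨k - 1, ha⟩) hbad
      simp only [Equiv.trans_apply, Equiv.swap_apply_self] at h2
      rw [h2, Equiv.swap_apply_of_ne_of_ne (by simp [Fin.ext_iff]; omega)
        (by simp [Fin.ext_iff]; omega)]
    have hy0 := y.2.2 h01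
    set r := y.1.symm ⟨k - 1, ha⟩ with hrr
    have hr : y.1 r = ⟨k - 1, ha⟩ := y.1.apply_symm_apply _
    have hr0 : (r : ℕ) ≠ 0 := by
      intro h
      have : r = ⟨0, h01⟩ := Fin.ext h
      rw [this] at hr
      rw [hr] at hy0
      have hcon : k - 1 + 1 = k - 1 := hy0
      omega
    have hr1 : (r : ℕ) ≠ 1 := by
      intro h
      have : r = ⟨1, h1m⟩ := Fin.ext h
      rw [this, hyz1] at hr
      have hcon : k = k - 1 := congrArg Fin.val hr
      omega
    refine y.2.1 ⟨⟨0, h01⟩, ⟨1, h1m⟩, r,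
      by rw [Fin.lt_def]; show (0 : ℕ) < 1; omega,
      by rw [Fin.lt_def]; show (1 : ℕ) < (r : ℕ); omega,
      ?_, ?_⟩
    · rw [Fin.lt_def, hr]
      show ((y.1 ⟨0, h01⟩ : Fin (m + 1)) : ℕ) < k - 1
      omega
    · rw [Fin.lt_def, hr, hyz1]
      show k - 1 < k
      omega

/-- `C_{n,k} = C_{n,k-1} + C_{n-1,k}` for `2 ≤ k ≤ n-1`. -/
theorem ballot_pascal (n k : ℕ) (hk1 : 2 ≤ k) (hkn : k ≤ n - 1) :
    ballot n k = ballot n (k - 1) + ballot (n - 1) k := by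
  classical
  obtain ⟨m, rfl⟩ : ∃ m, n = m + 1 := ⟨n - 1, by omega⟩
  have hm : 2 ≤ m := by omega
  have hkm : k ≤ m := by omega
  have hsub : m + 1 - 1 = m := by omega
  rw [hsub]
  have h1m : 1 < m + 1 := by omega
  have hkm1 : k < m + 1 := by omega
  unfold ballot
  have e1 : Nat.card {σ : Equiv.Perm (Fin (m + 1)) //
      Avoids132 σ ∧ ∀ h : 0 < m + 1, ((σ ⟨0, h⟩ : Fin (m + 1)) : ℕ) + 1 = k} =
      Nat.card {x : {σ : Equiv.Perm (Fin (m + 1)) //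
        Avoids132 σ ∧ ∀ h : 0 < m + 1, ((σ ⟨0, h⟩ : Fin (m + 1)) : ℕ) + 1 = k} //
          x.1 ⟨1, h1m⟩ = ⟨k, hkm1⟩} +
      Nat.card {x : {σ : Equiv.Perm (Fin (m + 1)) //
        Avoids132 σ ∧ ∀ h : 0 < m + 1, ((σ ⟨0, h⟩ : Fin (m + 1)) : ℕ) + 1 = k} //
          ¬ x.1 ⟨1, h1m⟩ = ⟨k, hkm1⟩} := by
    rw [← Nat.card_sum]
    exact (Nat.card_congr (Equiv.sumCompl _)).symm
  rw [e1]
  have eY : Nat.card {x : {σ : Equiv.Perm (Fin (m + 1)) //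
        Avoids132 σ ∧ ∀ h : 0 < m + 1, ((σ ⟨0, h⟩ : Fin (m + 1)) : ℕ) + 1 = k} //
          x.1 ⟨1, h1m⟩ = ⟨k, hkm1⟩} =
      Nat.card {τ : Equiv.Perm (Fin m) //
        Avoids132 τ ∧ ∀ h : 0 < m, ((τ ⟨0, h⟩ : Fin m) : ℕ) + 1 = k} :=
    Nat.card_congr ((Equiv.subtypeSubtypeEquivSubtypeInter _ _).trans (bp_equivY hm hk1 hkm))
  have eX : Nat.card {x : {σ : Equiv.Perm (Fin (m + 1)) //
        Avoids132 σ ∧ ∀ h : 0 < m + 1, ((σ ⟨0, h⟩ : Fin (m + 1)) : ℕ) + 1 = k} //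
          ¬ x.1 ⟨1, h1m⟩ = ⟨k, hkm1⟩} =
      Nat.card {σ : Equiv.Perm (Fin (m + 1)) //
        Avoids132 σ ∧ ∀ h : 0 < m + 1, ((σ ⟨0, h⟩ : Fin (m + 1)) : ℕ) + 1 = k - 1} :=
    Nat.card_congr ((Equiv.subtypeSubtypeEquivSubtypeInter _ _).trans (bp_equivX hm hk1 hkm))
  rw [eY, eX]
  exact Nat.add_comm _ _
end

section
/- The number of 132-avoiding permutations of S_n with first entry k equals (n−k+1)/n · binomial(n+k−2, k−1). -/
open List

namespace Ballot132


def Pat (l : List ℕ) : Prop := ∃ a b c : ℕ, a < b ∧ b < c ∧ [a, c, b] <+ l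

open scoped Classical in
noncomputable def S (n K : ℕ) : Finset (List ℕ) :=
  ((List.range n).permutations.toFinset).filter (fun l => ¬ Pat l ∧ l.head? = some K)

noncomputable def B (n K : ℕ) : ℕ := (S n K).card

lemma mem_S {n K : ℕ} {l : List ℕ} :
    l ∈ S n K ↔ (l ~ List.range n) ∧ ¬ Pat l ∧ l.head? = some K := by
  simp [S, List.mem_toFinset, List.mem_permutations]

lemma perm_range_of {n : ℕ} {l : List ℕ} (h1 : l.length = n) (h2 : l.Nodup)
    (h3 : ∀ x ∈ l, x < n) : l ~ List.range n := by
  refine (List.subperm_of_subset h2 ?_).perm_of_length_le (by simp [h1])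
  intro x hx; simpa using h3 x hx

lemma Perm.range_facts {n : ℕ} {l : List ℕ} (h : l ~ List.range n) :
    l.length = n ∧ l.Nodup ∧ (∀ x, (x ∈ l ↔ x < n)) := by
  refine ⟨by simpa using h.length_eq, h.nodup_iff.2 (List.nodup_range ..), fun x => ?_⟩
  rw [h.mem_iff, List.mem_range]

lemma head_first {x : ℕ} {t u : List ℕ} (hx : x ∉ t) (hu : u <+ x :: t)
    (hmem : x ∈ u) : ∃ r, u = x :: r := by
  rcases List.sublist_cons_iff.1 hu with h | ⟨r, rfl, hr⟩
  · exact absurd (h.subset hmem) hx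
  · exact ⟨r, rfl⟩

lemma triple_of_map {f : ℕ → ℕ} {t : List ℕ} {a b c : ℕ}
    (h : [a, c, b] <+ map f t) :
    ∃ x z y, [x, z, y] <+ t ∧ f x = a ∧ f z = c ∧ f y = b := by
  obtain ⟨r, hr, hmap⟩ := List.sublist_map_iff.1 h
  match r, hmap with
  | [x, z, y], hmap =>
    simp only [List.map_cons, List.map_nil, List.cons.injEq, and_true] at hmap
    exact ⟨x, z, y, hr, hmap.1.symm, hmap.2.1.symm, hmap.2.2.symm⟩

/-! ### the value swap `K-1 ↔ K` -/

def sw (K v : ℕ) : ℕ := if v = K - 1 then K else if v = K then K - 1 else v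

lemma sw_sw {K : ℕ} (hK : 1 ≤ K) (v : ℕ) : sw K (sw K v) = v := by
  unfold sw; split_ifs <;> omega

lemma sw_lt {K : ℕ} (hK : 1 ≤ K) {p q : ℕ} (h : p < q)
    (hne : ¬(p = K - 1 ∧ q = K)) : sw K p < sw K q := by
  unfold sw; split_ifs <;> omega

lemma sw_eq_K1 {K v : ℕ} (hK : 1 ≤ K) : sw K v = K + 1 ↔ v = K + 1 := by
  unfold sw; split_ifs <;> omega

lemma sw_lower {K v : ℕ} (hK : 1 ≤ K) : sw K v ≤ max v K := by
  unfold sw; split_ifs <;> omega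

lemma map_sw_sw {K : ℕ} (hK : 1 ≤ K) (l : List ℕ) :
    map (sw K) (map (sw K) l) = l := by
  rw [List.map_map]
  exact (List.map_congr_left fun a _ => sw_sw hK a).trans (List.map_id l)

lemma swap_perm {n K : ℕ} (hK : 1 ≤ K) (hKn : K < n) {l : List ℕ}
    (hperm : l ~ List.range n) : map (sw K) l ~ List.range n := by
  obtain ⟨hlen, hnd, hmem⟩ := Perm.range_facts hperm
  refine perm_range_of (by simp [hlen]) ?_ ?_
  · exact hnd.map_on (fun x _ y _ hxy => by
      rw [← sw_sw hK x, hxy, sw_sw hK])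
  · intro x hx
    obtain ⟨v, hv, rfl⟩ := List.mem_map.1 hx
    have := (hmem v).1 hv
    have := sw_lower (v := v) hK
    omega

/-- key position lemma: in a 132-avoiding list `K :: t` whose second entry is
not `K+1`, no value `> K` can occur before `K-1`. -/
lemma pos_lemma {n K : ℕ} {t : List ℕ} (hK : 1 ≤ K)
    (hperm : (K :: t) ~ List.range n) (hav : ¬ Pat (K :: t))
    (hsec : t.head? ≠ some (K + 1)) {c : ℕ} (hc : K + 1 ≤ c)
    (hsub : [c, K - 1] <+ t) : False := by
  obtain ⟨hlen, hnd, hmem⟩ := Perm.range_facts hperm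
  rw [List.nodup_cons] at hnd
  obtain ⟨hKt, hndt⟩ := hnd
  have hct : c ∈ t := hsub.subset (by simp)
  cases t with
  | nil => simp at hct
  | cons w t₂ =>
    have hwK1 : w ≠ K + 1 := fun h => hsec (by simp [h])
    have hwK : w ≠ K := fun h => hKt (by simp [h])
    have hcn : c < n := (hmem c).1 (List.mem_cons_of_mem _ hct)
    have hK1mem : K + 1 ∈ K :: w :: t₂ := (hmem (K + 1)).2 (by omega)
    have hK12 : K + 1 ∈ t₂ := by
      rcases List.mem_cons.1 hK1mem with h | h
      · omega
      rcases List.mem_cons.1 h with h | h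
      · exact absurd h.symm hwK1
      · exact h
    rw [List.nodup_cons] at hndt
    have patKw : w ≥ K + 2 → False := by
      intro hw
      exact hav ⟨K, K + 1, w, by omega, by omega,
        (((List.singleton_sublist.2 hK12).cons₂ w).cons₂ K)⟩
    rcases List.sublist_cons_iff.1 hsub with h | ⟨r, hr, hrsub⟩
    · -- [c, K-1] <+ t₂
      rcases lt_trichotomy w (K - 1) with hw | hw | hw
      · exact hav ⟨w, K - 1, c, by omega, by omega, ((h.cons₂ w).cons K)⟩
      · exact hndt.1 (by simpa [hw] using h.subset (by simp : K - 1 ∈ [c, K - 1]))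
      · have : w ≥ K + 2 := by omega
        exact patKw this
    · -- c = w
      have hcw : c = w := by
        have := congrArg List.head? hr
        simpa using this
      exact patKw (by omega)

/-- pattern in a swapped list comes from a pattern or two special configurations -/
lemma swap_pat_cases {K : ℕ} (hK : 1 ≤ K) {l : List ℕ} (hp : Pat (map (sw K) l)) :
    Pat l ∨ (∃ c, K < c ∧ [K, c, K - 1] <+ l) ∨ (∃ a, a < K - 1 ∧ [a, K - 1, K] <+ l) := by
  obtain ⟨a, b, c, hab, hbc, hsub⟩ := hp
  obtain ⟨x, z, y, hsub', hx, hz, hy⟩ := triple_of_map hsub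
  have hx' : x = sw K a := by rw [← hx, sw_sw hK]
  have hy' : y = sw K b := by rw [← hy, sw_sw hK]
  have hz' : z = sw K c := by rw [← hz, sw_sw hK]
  by_cases h1 : a = K - 1 ∧ b = K
  · right; left
    refine ⟨c, by omega, ?_⟩
    have ex : x = K ∧ y = K - 1 ∧ z = c := by
      refine ⟨?_, ?_, ?_⟩ <;> (first | rw [hx'] | rw [hy'] | rw [hz']) <;>
        (unfold sw; split_ifs <;> omega)
    obtain ⟨e1, e2, e3⟩ := ex
    rwa [e1, e2, e3] at hsub'
  · by_cases h2 : b = K - 1 ∧ c = K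
    · right; right
      refine ⟨a, by omega, ?_⟩
      have ex : x = a ∧ y = K ∧ z = K - 1 := by
        refine ⟨?_, ?_, ?_⟩ <;> (first | rw [hx'] | rw [hy'] | rw [hz']) <;>
          (unfold sw; split_ifs <;> omega)
      obtain ⟨e1, e2, e3⟩ := ex
      rwa [e1, e2, e3] at hsub'
    · left
      have hxy : x < y := by rw [hx', hy']; exact sw_lt hK hab h1
      have hyz : y < z := by rw [hy', hz']; exact sw_lt hK hbc h2
      exact ⟨x, y, z, hxy, hyz, hsub'⟩


lemma head_destruct {K : ℕ} {l : List ℕ} (hh : l.head? = some K) :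
    ∃ t, l = K :: t := by
  cases l with
  | nil => simp at hh
  | cons a t => exact ⟨t, by rw [show a = K by simpa using hh]⟩

lemma swap_backward {n K : ℕ} (hK : 1 ≤ K) (hKn : K < n) {l : List ℕ}
    (hl : l ∈ S n K) (hsec : l.tail.head? ≠ some (K + 1)) :
    map (sw K) l ∈ S n (K - 1) := by
  obtain ⟨hperm, hav, hh⟩ := mem_S.1 hl
  obtain ⟨hlen, hnd, hmem⟩ := Perm.range_facts hperm
  obtain ⟨t, rfl⟩ := head_destruct hh
  · rw [List.nodup_cons] at hnd
    refine mem_S.2 ⟨swap_perm hK hKn hperm, ?_, ?_⟩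
    · intro hp
      rcases swap_pat_cases hK hp with h | ⟨c, hc, h⟩ | ⟨a, ha, h⟩
      · exact hav h
      · rcases List.sublist_cons_iff.1 h with h' | ⟨r, hr, hrsub⟩
        · exact hnd.1 (h'.subset (by simp))
        · have : [c, K - 1] <+ t := by
            have : r = [c, K - 1] := by simpa using hr.symm
            rwa [this] at hrsub
          exact pos_lemma hK hperm hav (by simpa using hsec) (by omega) this
      · obtain ⟨r, hr⟩ := head_first hnd.1 h (by simp)
        have : a = K := by simpa using congrArg List.head? hr
        omega
    · have : sw K K = K - 1 := by unfold sw; split_ifs <;> omega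
      simp [this]

lemma swap_forward {n K : ℕ} (hK : 1 ≤ K) (hKn : K < n) {l : List ℕ}
    (hl : l ∈ S n (K - 1)) :
    map (sw K) l ∈ S n K ∧ (map (sw K) l).tail.head? ≠ some (K + 1) := by
  obtain ⟨hperm, hav, hh⟩ := mem_S.1 hl
  obtain ⟨hlen, hnd, hmem⟩ := Perm.range_facts hperm
  obtain ⟨t, rfl⟩ := head_destruct hh
  · rw [List.nodup_cons] at hnd
    have hswh : sw K (K - 1) = K := by unfold sw; split_ifs <;> omega
    have hsecond : t.head? ≠ some (K + 1) := by
      intro hcon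
      cases t with
      | nil => simp at hcon
      | cons v t₂ =>
        have hv : v = K + 1 := by simpa using hcon
        subst hv
        have hKmem : K ∈ (K - 1) :: (K + 1) :: t₂ := (hmem K).2 (by omega)
        have hKt₂ : K ∈ t₂ := by
          rcases List.mem_cons.1 hKmem with h | h
          · omega
          rcases List.mem_cons.1 h with h | h
          · omega
          · exact h
        exact hav ⟨K - 1, K, K + 1, by omega, by omega,
          ((List.singleton_sublist.2 hKt₂).cons₂ (K + 1)).cons₂ (K - 1)⟩
    refine ⟨mem_S.2 ⟨swap_perm hK hKn hperm, ?_, by simp [hswh]⟩, ?_⟩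
    · intro hp
      rcases swap_pat_cases hK hp with h | ⟨c, hc, h⟩ | ⟨a, ha, h⟩
      · exact hav h
      · obtain ⟨r, hr⟩ := head_first hnd.1 h (by simp)
        have : K = K - 1 := by simpa using congrArg List.head? hr
        omega
      · obtain ⟨r, hr⟩ := head_first hnd.1 h (by simp)
        have : a = K - 1 := by simpa using congrArg List.head? hr
        omega
    · cases t with
      | nil => simp
      | cons v t₂ =>
        simp only [List.map_cons, List.tail_cons, List.head?_cons, ne_eq,
          Option.some.injEq]
        intro hcon
        exact hsecond (by rw [(sw_eq_K1 hK).1 hcon]; rfl)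

open scoped Classical in
lemma card_swap {n K : ℕ} (hK : 1 ≤ K) (hKn : K < n) :
    ((S n K).filter (fun l => ¬ l.tail.head? = some (K + 1))).card = B n (K - 1) := by
  rw [B]
  refine Finset.card_bij' (fun l _ => map (sw K) l) (fun l _ => map (sw K) l)
    ?_ ?_ ?_ ?_
  · intro l hl
    rw [Finset.mem_filter] at hl
    exact swap_backward hK hKn hl.1 hl.2
  · intro l hl
    rw [Finset.mem_filter]
    exact ⟨(swap_forward hK hKn hl).1, (swap_forward hK hKn hl).2⟩
  · intro l _; exact map_sw_sw hK l
  · intro l _; exact map_sw_sw hK l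

/-! ### deletion / insertion of value `K+1` at position 1 -/

def dm (K v : ℕ) : ℕ := if v ≤ K then v else v - 1
def um (K v : ℕ) : ℕ := if v ≤ K then v else v + 1

lemma dm_um {K v : ℕ} : dm K (um K v) = v := by unfold dm um; split_ifs <;> omega
lemma um_dm {K v : ℕ} (h : v ≠ K + 1) : um K (dm K v) = v := by
  unfold dm um; split_ifs <;> omega
lemma um_lt_iff {K a b : ℕ} : um K a < um K b ↔ a < b := by
  unfold um; split_ifs <;> omega
lemma um_ne_K1 {K v : ℕ} : um K v ≠ K + 1 := by unfold um; split_ifs <;> omega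
lemma um_inj {K : ℕ} : Function.Injective (um K) :=
  Function.LeftInverse.injective (g := dm K) fun _ => dm_um

lemma pair_of_map {f : ℕ → ℕ} {t : List ℕ} {a b : ℕ}
    (h : [a, b] <+ map f t) :
    ∃ x y, [x, y] <+ t ∧ f x = a ∧ f y = b := by
  obtain ⟨r, hr, hmap⟩ := List.sublist_map_iff.1 h
  match r, hmap with
  | [x, y], hmap =>
    simp only [List.map_cons, List.map_nil, List.cons.injEq, and_true] at hmap
    exact ⟨x, y, hr, hmap.1.symm, hmap.2.symm⟩

lemma del_mem {n K : ℕ} {t : List ℕ} (h : (K :: (K + 1) :: t) ∈ S n K) :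
    (K :: map (dm K) t) ∈ S (n - 1) K := by
  obtain ⟨hperm, hav, -⟩ := mem_S.1 h
  obtain ⟨hlen, hnd, hmem⟩ := Perm.range_facts hperm
  simp only [List.nodup_cons, List.mem_cons] at hnd
  have hK1n : K + 1 < n := (hmem (K + 1)).1 (by simp)
  have htK1 : (K + 1) ∉ t := hnd.2.1
  have htK : K ∉ t := fun hc => hnd.1 (Or.inr hc)
  refine mem_S.2 ⟨perm_range_of ?_ ?_ ?_, ?_, by simp⟩
  · simp only [List.length_cons, List.length_map]
    simp only [List.length_cons] at hlen
    omega
  · rw [List.nodup_cons]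
    constructor
    · intro hc
      obtain ⟨v, hv, hdv⟩ := List.mem_map.1 hc
      have : v = K ∨ v = K + 1 := by unfold dm at hdv; split_ifs at hdv <;> omega
      rcases this with rfl | rfl
      · exact htK hv
      · exact htK1 hv
    · exact hnd.2.2.map_on (fun x hx y hy hxy => by
        rw [← um_dm (show x ≠ K + 1 from fun hc => htK1 (hc ▸ hx)), hxy,
          um_dm (show y ≠ K + 1 from fun hc => htK1 (hc ▸ hy))]) 
  · intro x hx
    rcases List.mem_cons.1 hx with rfl | hx
    · omega
    · obtain ⟨v, hv, rfl⟩ := List.mem_map.1 hx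
      have hvn : v < n := (hmem v).1 (by simp [hv])
      have hvK1 : v ≠ K + 1 := fun hc => htK1 (hc ▸ hv)
      unfold dm; split_ifs <;> omega
  · rintro ⟨a, b, c, hab, hbc, hsub⟩
    have htsub : t <+ K :: (K + 1) :: t :=
      (List.sublist_cons_self _ t).trans (List.sublist_cons_self K _)
    rcases List.sublist_cons_iff.1 hsub with hsub' | ⟨r, hr, hrsub⟩
    · obtain ⟨x, z, y, hxyz, hx, hz, hy⟩ := triple_of_map hsub'
      have hxm := hxyz.subset (show x ∈ [x, z, y] by simp)
      have hym := hxyz.subset (show y ∈ [x, z, y] by simp)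
      have hzm := hxyz.subset (show z ∈ [x, z, y] by simp)
      have ex : x = um K a := by rw [← hx, um_dm (fun hc => htK1 (hc ▸ hxm))]
      have ey : y = um K b := by rw [← hy, um_dm (fun hc => htK1 (hc ▸ hym))]
      have ez : z = um K c := by rw [← hz, um_dm (fun hc => htK1 (hc ▸ hzm))]
      exact hav ⟨x, y, z, by rw [ex, ey]; exact um_lt_iff.2 hab,
        by rw [ey, ez]; exact um_lt_iff.2 hbc, hxyz.trans htsub⟩
    · have ha : a = K := by simpa using congrArg List.head? hr
      obtain ⟨-, hreq⟩ : K = a ∧ r = [c, b] := by simpa using hr.symm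
      have hr' : [c, b] <+ map (dm K) t := hreq ▸ hrsub
      obtain ⟨z, y, hzy, hz, hy⟩ := pair_of_map hr'
      have hym := hzy.subset (show y ∈ [z, y] by simp)
      have hzm := hzy.subset (show z ∈ [z, y] by simp)
      have ey : y = um K b := by rw [← hy, um_dm (fun hc => htK1 (hc ▸ hym))]
      have ez : z = um K c := by rw [← hz, um_dm (fun hc => htK1 (hc ▸ hzm))]
      have hyK : K < y := by subst ey; unfold um; split_ifs <;> omega
      have hyz : y < z := by rw [ey, ez]; exact um_lt_iff.2 hbc
      exact hav ⟨K, y, z, hyK, hyz, ((hzy.cons (K + 1)).cons₂ K)⟩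

lemma ins_mem {n K : ℕ} {t' : List ℕ} (h : (K :: t') ∈ S (n - 1) K) (hn : 1 ≤ n) :
    (K :: (K + 1) :: map (um K) t') ∈ S n K := by
  obtain ⟨hperm, hav, -⟩ := mem_S.1 h
  obtain ⟨hlen, hnd, hmem⟩ := Perm.range_facts hperm
  rw [List.nodup_cons] at hnd
  have hKn : K < n - 1 := (hmem K).1 (by simp)
  refine mem_S.2 ⟨perm_range_of ?_ ?_ ?_, ?_, by simp⟩
  · simp only [List.length_cons, List.length_map]
    simp only [List.length_cons] at hlen
    omega
  · simp only [List.nodup_cons, List.mem_cons]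
    refine ⟨?_, ?_, hnd.2.map um_inj⟩
    · rintro (hc | hc)
      · omega
      · obtain ⟨v, hv, hdv⟩ := List.mem_map.1 hc
        have : v = K := by unfold um at hdv; split_ifs at hdv <;> omega
        exact hnd.1 (this ▸ hv)
    · intro hc
      obtain ⟨v, hv, hdv⟩ := List.mem_map.1 hc
      exact um_ne_K1 hdv
  · intro x hx
    rcases List.mem_cons.1 hx with rfl | hx
    · omega
    rcases List.mem_cons.1 hx with rfl | hx
    · omega
    · obtain ⟨v, hv, rfl⟩ := List.mem_map.1 hx
      have hvn : v < n - 1 := (hmem v).1 (by simp [hv])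
      unfold um; split_ifs <;> omega
  · rintro ⟨a, b, c, hab, hbc, hsub⟩
    have inner1 : [a, c, b] <+ map (um K) t' → False := by
      intro hsub'
      obtain ⟨x, z, y, hxyz, hx, hz, hy⟩ := triple_of_map hsub'
      refine hav ⟨x, y, z, ?_, ?_, hxyz.trans (List.sublist_cons_self K t')⟩
      · rw [← um_lt_iff (K := K), hx, hy]; exact hab
      · rw [← um_lt_iff (K := K), hy, hz]; exact hbc
    have inner2 : ∀ a', K ≤ a' → a' < b → [c, b] <+ map (um K) t' → False := by
      intro a' ha' hab' hsub'
      obtain ⟨z, y, hzy, hz, hy⟩ := pair_of_map hsub'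
      have hbK1 : b ≠ K + 1 := fun hc => um_ne_K1 (hy.trans hc)
      have hyK : K < y := by
        have := hy; unfold um at this; split_ifs at this <;> omega
      have hyz : y < z := by rw [← um_lt_iff (K := K), hy, hz]; exact hbc
      exact hav ⟨K, y, z, hyK, hyz, hzy.cons₂ K⟩
    rcases List.sublist_cons_iff.1 hsub with h1 | ⟨r, hr, hrsub⟩
    · rcases List.sublist_cons_iff.1 h1 with h2 | ⟨r, hr, hrsub⟩
      · exact inner1 h2
      · obtain ⟨ha, hreq⟩ : K + 1 = a ∧ r = [c, b] := by simpa using hr.symm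
        exact inner2 (K + 1) (by omega) (by omega) (hreq ▸ hrsub)
    · obtain ⟨ha, hreq⟩ : K = a ∧ r = [c, b] := by simpa using hr.symm
      rcases List.sublist_cons_iff.1 (hreq ▸ hrsub) with h2 | ⟨r', hr', hrsub'⟩
      · exact inner2 K (le_refl K) (by omega) h2
      · obtain ⟨hc, -⟩ : K + 1 = c ∧ r' = [b] := by simpa using hr'.symm
        omega

open scoped Classical in
lemma card_ins {n K : ℕ} (hn : 1 ≤ n) :
    ((S n K).filter (fun l => l.tail.head? = some (K + 1))).card = B (n - 1) K := by
  rw [B]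
  refine Finset.card_bij' (fun l _ => K :: map (dm K) l.tail.tail)
    (fun l _ => K :: (K + 1) :: map (um K) l.tail) ?_ ?_ ?_ ?_
  · intro l hl
    rw [Finset.mem_filter] at hl
    obtain ⟨hS, hsec⟩ := hl
    obtain ⟨t₀, rfl⟩ := head_destruct (mem_S.1 hS).2.2
    obtain ⟨t, rfl⟩ := head_destruct (show t₀.head? = some (K + 1) by simpa using hsec)
    simpa using del_mem hS
  · intro l hl
    obtain ⟨t', rfl⟩ := head_destruct (mem_S.1 hl).2.2
    rw [Finset.mem_filter]
    exact ⟨by simpa using ins_mem hl hn, by simp⟩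
  · intro l hl
    rw [Finset.mem_filter] at hl
    obtain ⟨hS, hsec⟩ := hl
    obtain ⟨t₀, rfl⟩ := head_destruct (mem_S.1 hS).2.2
    obtain ⟨t, rfl⟩ := head_destruct (show t₀.head? = some (K + 1) by simpa using hsec)
    have hnd := (Perm.range_facts (mem_S.1 hS).1).2.1
    simp only [List.nodup_cons, List.mem_cons] at hnd
    have htK1 : (K + 1) ∉ t := hnd.2.1
    simp only [List.tail_cons, List.map_map]
    rw [show (map (um K ∘ dm K) t) = t from
      (List.map_congr_left fun a ha => um_dm (fun hc => htK1 (hc ▸ ha))).trans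
        (List.map_id t)]
  · intro l hl
    obtain ⟨t', rfl⟩ := head_destruct (mem_S.1 hl).2.2
    simp only [List.tail_cons, List.map_map]
    rw [show (map (dm K ∘ um K) t') = t' from
      (List.map_congr_left fun a _ => dm_um).trans (List.map_id t')]

lemma B_rec {n K : ℕ} (hK : 1 ≤ K) (hKn : K < n) :
    B n K = B n (K - 1) + B (n - 1) K := by
  classical
  have hsplit := Finset.card_filter_add_card_filter_not
    (s := S n K) (p := fun l => l.tail.head? = some (K + 1))
  rw [card_ins (by omega), card_swap hK hKn] at hsplit
  rw [B]
  omega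


lemma get_triple_sublist {α : Type*} (l : List α) (i j m : Fin l.length)
    (h1 : i < j) (h2 : j < m) : [l.get i, l.get j, l.get m] <+ l := by
  rw [List.sublist_iff_exists_fin_orderEmbedding_get_eq]
  have hsm : StrictMono (fun x : Fin 3 =>
      if (x : ℕ) = 0 then i else if (x : ℕ) = 1 then j else m) := by
    intro a b hab
    fin_cases a <;> fin_cases b <;> simp_all <;> omega
  refine ⟨OrderEmbedding.ofStrictMono _ hsm, fun ix => ?_⟩
  fin_cases ix <;> simp [hsm]


lemma B_eq_zero {n K : ℕ} (h : n ≤ K) : B n K = 0 := by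
  rw [B, Finset.card_eq_zero]
  refine Finset.eq_empty_of_forall_notMem fun l hl => ?_
  obtain ⟨hperm, -, hh⟩ := mem_S.1 hl
  have hKl : K ∈ l := by
    cases l with
    | nil => simp at hh
    | cons a t => simp_all
  have := (Perm.range_facts hperm).2.2 K |>.1 hKl
  omega


lemma B_zero {n : ℕ} (hn : 1 ≤ n) : B n 0 = 1 := by
  rw [B, Finset.card_eq_one]
  refine ⟨List.range n, ?_⟩
  ext l
  simp only [Finset.mem_singleton]
  constructor
  · intro hl
    obtain ⟨hperm, hav, hh⟩ := mem_S.1 hl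
    obtain ⟨hlen, hnd, hmem⟩ := Perm.range_facts hperm
    -- l is sorted
    have hsorted : List.Pairwise (· < ·) l := by
      rw [List.pairwise_iff_get]
      intro i j hij
      rcases lt_trichotomy (l.get i) (l.get j) with h | h | h
      · exact h
      · exact absurd ((hnd.get_inj_iff).1 h) (by omega)
      · -- build a 132 pattern
        exfalso
        have h0 : (0 : ℕ) < l.length := by omega
        have hg0 : l.get ⟨0, h0⟩ = 0 := by
          cases l with
          | nil => simp at hh
          | cons a t => simpa using hh
        have hi0 : (0 : ℕ) < (i : ℕ) := by
          rcases Nat.eq_zero_or_pos (i : ℕ) with h' | h'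
          · have : i = ⟨0, h0⟩ := by ext; exact h'
            rw [this, hg0] at h; omega
          · exact h'
        have hj0 : l.get j ≠ 0 := by
          intro hj0
          have : l.get j = l.get ⟨0, h0⟩ := by rw [hg0, hj0]
          have := (hnd.get_inj_iff).1 this
          have : (j : ℕ) = 0 := by simpa using congrArg Fin.val this
          omega
        refine hav ⟨0, l.get j, l.get i, by omega, h, ?_⟩
        have := get_triple_sublist l ⟨0, h0⟩ i j (by simpa [Fin.lt_def] using hi0) hij
        rwa [hg0] at this
    haveI : IsAntisymm ℕ (· < ·) := ⟨fun a b h1 h2 => by omega⟩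
    exact List.Perm.eq_of_pairwise' hsorted
      (by exact List.pairwise_lt_range) hperm
  · rintro rfl
    refine mem_S.2 ⟨List.Perm.refl _, ?_, ?_⟩
    · rintro ⟨a, b, c, hab, hbc, hsub⟩
      have := (List.pairwise_lt_range (n := n)).sublist hsub
      simp at this
      omega
    · obtain ⟨m, rfl⟩ : ∃ m, n = m + 1 := ⟨n - 1, by omega⟩
      rw [List.range_succ_eq_map]
      rfl


lemma pat_ofFn_iff {n : ℕ} (f : Fin n → ℕ) :
    Pat (ofFn f) ↔ ∃ j k l : Fin n, j < k ∧ k < l ∧ f j < f l ∧ f l < f k := by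
  have hlen : (ofFn f).length = n := by simp
  constructor
  · rintro ⟨a, b, c, hab, hbc, hsub⟩
    obtain ⟨e, he⟩ := List.sublist_iff_exists_fin_orderEmbedding_get_eq.1 hsub
    set e' : Fin 3 ↪o Fin n :=
      ((Fin.castOrderIso (show (3 : ℕ) = ([a, c, b] : List ℕ).length from rfl)).toOrderEmbedding.trans
        e).trans (Fin.castOrderIso hlen).toOrderEmbedding with he'
    have key : ∀ ix : Fin 3,
        ([a, c, b] : List ℕ).get (Fin.cast (show (3 : ℕ) = ([a, c, b] : List ℕ).length from rfl) ix)
          = f (e' ix) := by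
      intro ix
      rw [he, List.get_ofFn, he']
      congr 1
    have ha : a = f (e' 0) := by simpa using key 0
    have hc : c = f (e' 1) := by simpa using key 1
    have hb : b = f (e' 2) := by simpa using key 2
    refine ⟨e' 0, e' 1, e' 2, e'.strictMono (by decide), e'.strictMono (by decide),
      ?_, ?_⟩
    · rw [← ha, ← hb]; exact hab
    · rw [← hb, ← hc]; exact hbc
  · rintro ⟨j, k, l, hjk, hkl, h1, h2⟩
    refine ⟨f j, f l, f k, h1, h2, ?_⟩
    have h3 := get_triple_sublist (ofFn f) (Fin.cast hlen.symm j) (Fin.cast hlen.symm k)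
      (Fin.cast hlen.symm l) (by simp [Fin.lt_def, Fin.lt_iff_val_lt_val.1 hjk])
      (by simp [Fin.lt_def, Fin.lt_iff_val_lt_val.1 hkl])
    rw [List.get_ofFn, List.get_ofFn, List.get_ofFn] at h3
    have e1 : Fin.cast (by simp) (Fin.cast hlen.symm j) = j := by ext; simp
    have e2 : Fin.cast (by simp) (Fin.cast hlen.symm k) = k := by ext; simp
    have e3 : Fin.cast (by simp) (Fin.cast hlen.symm l) = l := by ext; simp
    rwa [e1, e2, e3] at h3

lemma avoids_iff {n : ℕ} (σ : Equiv.Perm (Fin n)) :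
    Avoids132 σ ↔ ¬ Pat (ofFn fun i => ((σ i : Fin n) : ℕ)) := by
  rw [Avoids132, pat_ofFn_iff]
  simp only [Fin.lt_def]


lemma bridge {n K : ℕ} (hn : 0 < n) : ballot n (K + 1) = B n K := by
  rw [ballot, B, ← Nat.card_eq_finsetCard]
  have hF : ∀ σ : {σ : Equiv.Perm (Fin n) //
      Avoids132 σ ∧ ∀ h : 0 < n, ((σ ⟨0, h⟩ : Fin n) : ℕ) + 1 = K + 1},
      ofFn (fun i => ((σ.1 i : Fin n) : ℕ)) ∈ S n K := by
    rintro ⟨σ, hav, hhead⟩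
    refine mem_S.2 ⟨perm_range_of (by simp) ?_ ?_, (avoids_iff σ).1 hav, ?_⟩
    · rw [List.nodup_ofFn]
      intro i j hij
      exact σ.injective (Fin.ext hij)
    · intro x hx
      obtain ⟨i, hi⟩ := List.mem_ofFn.1 hx
      rw [← hi]; exact (σ i).isLt
    · obtain ⟨m, rfl⟩ : ∃ m, n = m + 1 := ⟨n - 1, by omega⟩
      rw [List.ofFn_succ]
      have h0 := hhead hn
      have e0 : (⟨0, hn⟩ : Fin (m + 1)) = 0 := rfl
      rw [e0] at h0
      simp only [List.head?_cons, Option.some.injEq]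
      omega
  refine Nat.card_eq_of_bijective (fun σ => ⟨_, hF σ⟩) ⟨?_, ?_⟩
  · rintro ⟨σ, hσ⟩ ⟨τ, hτ⟩ h
    simp only [Subtype.mk.injEq, List.ofFn_inj] at h
    exact Subtype.ext (Equiv.ext fun i => Fin.ext (congrFun h i))
  · rintro ⟨l, hl⟩
    obtain ⟨hperm, hav, hh⟩ := mem_S.1 hl
    obtain ⟨hlen, hnd, hmem⟩ := Perm.range_facts hperm
    have hbound : ∀ i : Fin n, l.get (Fin.cast hlen.symm i) < n := by
      intro i
      exact (hmem _).1 (l.get_mem _)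
    have hginj : Function.Injective
        (fun i : Fin n => (⟨l.get (Fin.cast hlen.symm i), hbound i⟩ : Fin n)) := by
      intro i j hij
      have h2 : l.get (Fin.cast hlen.symm i) = l.get (Fin.cast hlen.symm j) := by
        simpa [Fin.ext_iff] using hij
      have := (hnd.get_inj_iff).1 h2
      simpa [Fin.ext_iff] using this
    have hgbij := (Finite.injective_iff_bijective).1 hginj
    refine ⟨⟨Equiv.ofBijective _ hgbij, ?_, ?_⟩, ?_⟩
    · rw [avoids_iff]
      have hofn : ofFn (fun i => ((Equiv.ofBijective _ hgbij i : Fin n) : ℕ)) = l := by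
        refine List.ext_get (by simp [hlen]) ?_
        intro i h1 h2
        rw [List.get_ofFn]
        simp [Equiv.ofBijective_apply]; rfl
      rw [hofn]; exact hav
    · intro h
      obtain ⟨t, rfl⟩ := head_destruct hh
      rfl
    · refine Subtype.ext ?_
      refine List.ext_get (by simp [hlen]) ?_
      intro i h1 h2
      rw [List.get_ofFn]
      simp [Equiv.ofBijective_apply]; rfl

lemma B_add (m : ℕ) : ∀ n K, n + K ≤ m → 1 ≤ K → K < n →
    B n K + (n + K - 1).choose (K - 1) = (n + K - 1).choose K := by
  induction m with
  | zero => intro n K h h1 h2; omega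
  | succ m ih =>
    intro n K hm hK hKn
    have huni : B (n - 1) K + (n + K - 2).choose (K - 1) = (n + K - 2).choose K := by
      rcases eq_or_lt_of_le (show K ≤ n - 1 by omega) with he | hlt
      · rw [B_eq_zero (le_of_eq he.symm), zero_add]
        have h4 := Nat.choose_symm (show K ≤ n + K - 2 by omega)
        rwa [show n + K - 2 - K = K - 1 by omega] at h4
      · have h5 := ih (n - 1) K (by omega) hK hlt
        rwa [show n - 1 + K - 1 = n + K - 2 by omega] at h5
    have hrec := B_rec hK hKn
    rcases eq_or_lt_of_le hK with hK1 | hK2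
    · -- K = 1
      rw [← hK1] at hrec huni ⊢
      rw [B_zero (by omega)] at hrec
      simp only [Nat.sub_self, Nat.choose_zero_right, Nat.choose_one_right] at huni ⊢
      omega
    · -- K ≥ 2
      have h1 := ih n (K - 1) (by omega) (by omega) (by omega)
      rw [show n + (K - 1) - 1 = n + K - 2 by omega,
          show K - 1 - 1 = K - 2 by omega] at h1
      have hp1 : (n + K - 1).choose K = (n + K - 2).choose (K - 1) + (n + K - 2).choose K := by
        have := Nat.choose_succ_succ (n + K - 2) (K - 1)
        rw [Nat.succ_eq_add_one, Nat.succ_eq_add_one] at this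
        rwa [show n + K - 2 + 1 = n + K - 1 by omega, show K - 1 + 1 = K by omega] at this
      have hp2 : (n + K - 1).choose (K - 1)
          = (n + K - 2).choose (K - 2) + (n + K - 2).choose (K - 1) := by
        have := Nat.choose_succ_succ (n + K - 2) (K - 2)
        rw [Nat.succ_eq_add_one, Nat.succ_eq_add_one] at this
        rwa [show n + K - 2 + 1 = n + K - 1 by omega, show K - 2 + 1 = K - 1 by omega] at this
      omega


end Ballot132

open Ballot132 in
/-- `C_{n,k} = (n-k+1)/n · binom(n+k-2, k-1)`, stated in cross-multiplied form. -/
theorem ballot_formula (n k : ℕ) (hk1 : 1 ≤ k) (hkn : k ≤ n) :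
    n * ballot n k = (n - k + 1) * Nat.choose (n + k - 2) (k - 1) := by
  obtain ⟨K, rfl⟩ : ∃ K, k = K + 1 := ⟨k - 1, by omega⟩
  have hn : 0 < n := by omega
  rw [bridge hn]
  rw [show n - (K + 1) + 1 = n - K by omega, show n + (K + 1) - 2 = n + K - 1 by omega,
      show K + 1 - 1 = K by omega]
  rcases Nat.eq_zero_or_pos K with rfl | hK
  · rw [B_zero hn]
    simp only [Nat.choose_zero_right, Nat.sub_zero, Nat.mul_one, Nat.mul_one]
  · have hKn : K < n := by omega
    have key := B_add (n + K) n K le_rfl hK hKn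
    have h3 := Nat.choose_succ_right_eq (n + K - 1) (K - 1)
    rw [show K - 1 + 1 = K by omega, show n + K - 1 - (K - 1) = n by omega] at h3
    have expand : n * (B n K) + n * ((n + K - 1).choose (K - 1))
        = n * ((n + K - 1).choose K) := by
      rw [← Nat.mul_add, key]
    have h4 : n * ((n + K - 1).choose (K - 1)) = K * ((n + K - 1).choose K) := by
      rw [Nat.mul_comm, ← h3, Nat.mul_comm]
    have h5 : n * ((n + K - 1).choose K)
        = (n - K) * ((n + K - 1).choose K) + K * ((n + K - 1).choose K) := by
      rw [← Nat.add_mul, Nat.sub_add_cancel (le_of_lt hKn)]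
    omega
end

section
/- The number of 132-avoiding permutations of S_{n+1} beginning with n+1 equals the Catalan number C_n = (1/(n+1))·binomial(2n,n). -/
namespace Avoid132Aux

variable {N m p : ℕ}


def glueVal (τ : Equiv.Perm (Fin m)) (ρ : Equiv.Perm (Fin p)) (i : ℕ) : ℕ :=
  if h : i < m then p + τ ⟨i, h⟩
  else if i = m then m + p
  else if h : i - (m + 1) < p then ρ ⟨i - (m + 1), h⟩ else 0

def unglueVal (τ : Equiv.Perm (Fin m)) (ρ : Equiv.Perm (Fin p)) (v : ℕ) : ℕ :=
  if h : v < p then m + 1 + ρ.symm ⟨v, h⟩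
  else if h : v - p < m then τ.symm ⟨v - p, h⟩ else m

lemma glueVal_of_lt (τ : Equiv.Perm (Fin m)) (ρ : Equiv.Perm (Fin p)) {i : ℕ} (h : i < m) :
    glueVal τ ρ i = p + τ ⟨i, h⟩ := by simp [glueVal, h]

lemma glueVal_of_eq (τ : Equiv.Perm (Fin m)) (ρ : Equiv.Perm (Fin p)) :
    glueVal τ ρ m = m + p := by simp [glueVal]

lemma glueVal_of_gt (τ : Equiv.Perm (Fin m)) (ρ : Equiv.Perm (Fin p)) {i : ℕ} (h : m < i)
    (h2 : i - (m + 1) < p) : glueVal τ ρ i = ρ ⟨i - (m + 1), h2⟩ := by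
  rw [glueVal, dif_neg (by omega), if_neg (by omega), dif_pos h2]

lemma glueVal_bound (τ : Equiv.Perm (Fin m)) (ρ : Equiv.Perm (Fin p)) {i : ℕ}
    (hi : i < m + 1 + p) : glueVal τ ρ i < m + 1 + p := by
  rcases Nat.lt_trichotomy i m with h | h | h
  · rw [glueVal_of_lt τ ρ h]; have := (τ ⟨i, h⟩).isLt; omega
  · rw [h, glueVal_of_eq]; omega
  · rw [glueVal_of_gt τ ρ h (by omega)]; have := (ρ ⟨i - (m + 1), by omega⟩).isLt; omega

lemma unglueVal_glueVal (τ : Equiv.Perm (Fin m)) (ρ : Equiv.Perm (Fin p)) {i : ℕ}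
    (hi : i < m + 1 + p) : unglueVal τ ρ (glueVal τ ρ i) = i := by
  rcases Nat.lt_trichotomy i m with h | h | h
  · rw [glueVal_of_lt τ ρ h]
    have ht := (τ ⟨i, h⟩).isLt
    rw [unglueVal, dif_neg (by omega), dif_pos (by omega : p + (τ ⟨i, h⟩ : ℕ) - p < m)]
    have h2 : (⟨p + (τ ⟨i, h⟩ : ℕ) - p, by omega⟩ : Fin m) = τ ⟨i, h⟩ := by
      apply Fin.ext; show p + (τ ⟨i, h⟩ : ℕ) - p = _; omega
    rw [h2, Equiv.symm_apply_apply]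
  · rw [h, glueVal_of_eq, unglueVal, dif_neg (by omega), dif_neg (by omega)]
  · rw [glueVal_of_gt τ ρ h (by omega)]
    have hr := (ρ ⟨i - (m + 1), by omega⟩).isLt
    rw [unglueVal, dif_pos hr]
    have h2 : (⟨(ρ ⟨i - (m + 1), by omega⟩ : ℕ), hr⟩ : Fin p) = ρ ⟨i - (m + 1), by omega⟩ :=
      Fin.ext rfl
    rw [h2, Equiv.symm_apply_apply]
    show m + 1 + (i - (m + 1)) = i
    omega

lemma glueVal_unglueVal (τ : Equiv.Perm (Fin m)) (ρ : Equiv.Perm (Fin p)) {v : ℕ}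
    (hv : v < m + 1 + p) : glueVal τ ρ (unglueVal τ ρ v) = v := by
  by_cases h : v < p
  · rw [unglueVal, dif_pos h]
    have hr := (ρ.symm ⟨v, h⟩).isLt
    rw [glueVal_of_gt τ ρ (by omega) (by omega)]
    have h2 : (⟨m + 1 + (ρ.symm ⟨v, h⟩ : ℕ) - (m + 1), by omega⟩ : Fin p) = ρ.symm ⟨v, h⟩ := by
      apply Fin.ext; show m + 1 + (ρ.symm ⟨v, h⟩ : ℕ) - (m + 1) = _; omega
    rw [h2, Equiv.apply_symm_apply]
  · by_cases h2 : v - p < m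
    · rw [unglueVal, dif_neg h, dif_pos h2]
      have ht := (τ.symm ⟨v - p, h2⟩).isLt
      rw [glueVal_of_lt τ ρ ht]
      have h3 : (⟨(τ.symm ⟨v - p, h2⟩ : ℕ), ht⟩ : Fin m) = τ.symm ⟨v - p, h2⟩ := Fin.ext rfl
      rw [h3, Equiv.apply_symm_apply]
      show p + (v - p) = v
      omega
    · rw [unglueVal, dif_neg h, dif_neg h2, glueVal_of_eq]; omega

def glue (hN : m + 1 + p = N) (τ : Equiv.Perm (Fin m)) (ρ : Equiv.Perm (Fin p)) :
    Equiv.Perm (Fin N) where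
  toFun i := ⟨glueVal τ ρ i, by
    have := glueVal_bound τ ρ (i := (i : ℕ)) (by omega); omega⟩
  invFun v := ⟨unglueVal τ ρ v, by
    rw [unglueVal]; split_ifs with h1 h2
    · have := (ρ.symm ⟨v, h1⟩).isLt; omega
    · have := (τ.symm ⟨(v : ℕ) - p, h2⟩).isLt; omega
    · omega⟩
  left_inv i := by
    apply Fin.ext
    simpa using unglueVal_glueVal τ ρ (i := (i : ℕ)) (by have := i.isLt; omega)
  right_inv v := by
    apply Fin.ext
    simpa using glueVal_unglueVal τ ρ (v := (v : ℕ)) (by have := v.isLt; omega)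

lemma glue_apply_val (hN : m + 1 + p = N) (τ : Equiv.Perm (Fin m)) (ρ : Equiv.Perm (Fin p))
    (i : Fin N) : ((glue hN τ ρ) i : ℕ) = glueVal τ ρ i := rfl

lemma glue_apply_left (hN : m + 1 + p = N) (τ : Equiv.Perm (Fin m)) (ρ : Equiv.Perm (Fin p))
    (a : Fin m) : ((glue hN τ ρ) ⟨(a : ℕ), by have := a.isLt; omega⟩ : ℕ) = p + τ a := by
  show glueVal τ ρ (a : ℕ) = p + τ a
  rw [glueVal_of_lt τ ρ a.isLt]

lemma glue_apply_mid (hN : m + 1 + p = N) (τ : Equiv.Perm (Fin m)) (ρ : Equiv.Perm (Fin p)) :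
    ((glue hN τ ρ) ⟨m, by omega⟩ : ℕ) = m + p := by
  show glueVal τ ρ m = m + p
  exact glueVal_of_eq τ ρ

lemma glue_apply_right (hN : m + 1 + p = N) (τ : Equiv.Perm (Fin m)) (ρ : Equiv.Perm (Fin p))
    (b : Fin p) : ((glue hN τ ρ) ⟨m + 1 + (b : ℕ), by have := b.isLt; omega⟩ : ℕ) = ρ b := by
  show glueVal τ ρ (m + 1 + (b : ℕ)) = ρ b
  rw [glueVal_of_gt τ ρ (by omega) (by have := b.isLt; omega)]
  have h3 : (⟨m + 1 + (b : ℕ) - (m + 1), by have := b.isLt; omega⟩ : Fin p) = b := by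
    apply Fin.ext; show m + 1 + (b : ℕ) - (m + 1) = (b : ℕ); omega
  rw [h3]

set_option maxHeartbeats 1000000 in
lemma glue_avoids_iff (hN : m + 1 + p = N) (τ : Equiv.Perm (Fin m)) (ρ : Equiv.Perm (Fin p)) :
    Avoids132 (glue hN τ ρ) ↔ Avoids132 τ ∧ Avoids132 ρ := by
  constructor
  · intro hσ
    constructor
    · rintro ⟨j, k, l, hjk, hkl, h1, h2⟩
      rw [Fin.lt_def] at hjk hkl h1 h2
      apply hσ
      refine ⟨⟨(j : ℕ), by have := j.isLt; omega⟩, ⟨(k : ℕ), by have := k.isLt; omega⟩,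
        ⟨(l : ℕ), by have := l.isLt; omega⟩, by rw [Fin.mk_lt_mk]; omega,
        by rw [Fin.mk_lt_mk]; omega, ?_, ?_⟩ <;>
      · rw [Fin.lt_def, glue_apply_left, glue_apply_left]; omega
    · rintro ⟨j, k, l, hjk, hkl, h1, h2⟩
      rw [Fin.lt_def] at hjk hkl h1 h2
      apply hσ
      refine ⟨⟨m + 1 + (j : ℕ), by have := j.isLt; omega⟩,
        ⟨m + 1 + (k : ℕ), by have := k.isLt; omega⟩,
        ⟨m + 1 + (l : ℕ), by have := l.isLt; omega⟩, by rw [Fin.mk_lt_mk]; omega,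
        by rw [Fin.mk_lt_mk]; omega, ?_, ?_⟩ <;>
      · rw [Fin.lt_def, glue_apply_right, glue_apply_right]; omega
  · rintro ⟨hτ, hρ⟩ ⟨j, k, l, hjk, hkl, h1, h2⟩
    rw [Fin.lt_def] at hjk hkl
    rw [Fin.lt_def, glue_apply_val, glue_apply_val] at h1 h2
    have hjN := j.isLt; have hkN := k.isLt; have hlN := l.isLt
    rcases Nat.lt_trichotomy (l : ℕ) m with hl | hl | hl
    · have hk : (k : ℕ) < m := by omega
      have hj : (j : ℕ) < m := by omega
      rw [glueVal_of_lt τ ρ hj, glueVal_of_lt τ ρ hl] at h1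
      rw [glueVal_of_lt τ ρ hl, glueVal_of_lt τ ρ hk] at h2
      exact hτ ⟨⟨j, hj⟩, ⟨k, hk⟩, ⟨l, hl⟩, by rw [Fin.mk_lt_mk]; omega,
        by rw [Fin.mk_lt_mk]; omega, by rw [Fin.lt_def]; omega, by rw [Fin.lt_def]; omega⟩
    · have hk : (k : ℕ) < m := by omega
      rw [hl, glueVal_of_eq, glueVal_of_lt τ ρ hk] at h2
      have := (τ ⟨k, hk⟩).isLt; omega
    · rw [glueVal_of_gt τ ρ hl (by omega)] at h1 h2
      have hlv := (ρ ⟨(l : ℕ) - (m + 1), by omega⟩).isLt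
      rcases Nat.lt_trichotomy (k : ℕ) m with hk | hk | hk
      · have hj : (j : ℕ) < m := by omega
        rw [glueVal_of_lt τ ρ hj] at h1; omega
      · have hj : (j : ℕ) < m := by omega
        rw [glueVal_of_lt τ ρ hj] at h1; omega
      · rcases Nat.lt_trichotomy (j : ℕ) m with hj | hj | hj
        · rw [glueVal_of_lt τ ρ hj] at h1; omega
        · rw [hj, glueVal_of_eq] at h1; omega
        · rw [glueVal_of_gt τ ρ hj (by omega)] at h1
          rw [glueVal_of_gt τ ρ hk (by omega)] at h2
          exact hρ ⟨⟨(j : ℕ) - (m + 1), by omega⟩, ⟨(k : ℕ) - (m + 1), by omega⟩,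
            ⟨(l : ℕ) - (m + 1), by omega⟩, by rw [Fin.mk_lt_mk]; omega,
            by rw [Fin.mk_lt_mk]; omega, by rw [Fin.lt_def]; omega, by rw [Fin.lt_def]; omega⟩
theorem cross_lt (hN : m + 1 + p = N) (σ : Equiv.Perm (Fin N)) (hσ : Avoids132 σ)
    (hmax : (σ ⟨m, by omega⟩ : ℕ) = m + p) {a b : Fin N} (ha : (a : ℕ) < m) (hb : m < (b : ℕ)) :
    (σ b : ℕ) < σ a := by
  by_contra hcon
  push_neg at hcon
  have hab : a ≠ b := by intro h; rw [h] at ha; omega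
  have hne : (σ a : ℕ) ≠ (σ b : ℕ) := by
    intro h; exact hab (σ.injective (Fin.ext h))
  have hbm : (σ b : ℕ) ≠ m + p := by
    intro h
    have h2 : σ b = σ ⟨m, by omega⟩ := by apply Fin.ext; rw [h, hmax]
    have h3 := σ.injective h2
    rw [h3] at hb; simp at hb
  have hbN := (σ b).isLt
  exact hσ ⟨a, ⟨m, by omega⟩, b, by rw [Fin.lt_def]; simpa, by rw [Fin.lt_def]; simpa,
    by rw [Fin.lt_def]; omega, by rw [Fin.lt_def]; omega⟩

theorem prefix_big (hN : m + 1 + p = N) (σ : Equiv.Perm (Fin N)) (hσ : Avoids132 σ)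
    (hmax : (σ ⟨m, by omega⟩ : ℕ) = m + p) {a : Fin N} (ha : (a : ℕ) < m) : p ≤ (σ a : ℕ) := by
  have key : Function.Injective (fun j : Fin p =>
      (⟨(σ ⟨m + 1 + j, by have := j.isLt; omega⟩ : ℕ),
        cross_lt hN σ hσ hmax ha (by simp; omega)⟩ : Fin (σ a : ℕ))) := by
    intro x y h
    simp only [Fin.mk.injEq] at h
    have h2 := σ.injective (Fin.ext h)
    simp only [Fin.mk.injEq] at h2
    apply Fin.ext; omega
  simpa using Fintype.card_le_of_injective _ key

theorem suffix_small (hN : m + 1 + p = N) (σ : Equiv.Perm (Fin N)) (hσ : Avoids132 σ)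
    (hmax : (σ ⟨m, by omega⟩ : ℕ) = m + p) {b : Fin N} (hb : m < (b : ℕ)) : (σ b : ℕ) < p := by
  have hbN := (σ b).isLt
  have key : ∀ w : Fin N, (w : ℕ) ≤ (σ b : ℕ) → m < (σ.symm w : ℕ) := by
    intro w hw
    rcases Nat.lt_trichotomy ((σ.symm w : Fin N) : ℕ) m with h | h | h
    · exfalso
      have h2 := cross_lt hN σ hσ hmax (a := σ.symm w) (b := b) h hb
      rw [Equiv.apply_symm_apply] at h2; omega
    · exfalso
      have h2 : σ.symm w = ⟨m, by omega⟩ := Fin.ext h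
      have h3 : w = σ ⟨m, by omega⟩ := by rw [← h2, Equiv.apply_symm_apply]
      have hww : (w : ℕ) = m + p := by rw [h3, hmax]
      have h4 : σ b = σ ⟨m, by omega⟩ := by apply Fin.ext; rw [hmax]; omega
      have h5 := σ.injective h4
      rw [h5] at hb; simp at hb
    · exact h
  have inj : Function.Injective (fun v : Fin ((σ b : ℕ) + 1) =>
      (⟨(σ.symm ⟨(v : ℕ), by have := v.isLt; omega⟩ : ℕ) - (m + 1), by
        have h1 := key ⟨(v : ℕ), by have := v.isLt; omega⟩ (by have := v.isLt; simp; omega)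
        have h2 := (σ.symm ⟨(v : ℕ), by have := v.isLt; omega⟩).isLt
        omega⟩ : Fin p)) := by
    intro x y h
    simp only [Fin.mk.injEq] at h
    have hx := key ⟨(x : ℕ), by have := x.isLt; omega⟩ (by have := x.isLt; simp; omega)
    have hy := key ⟨(y : ℕ), by have := y.isLt; omega⟩ (by have := y.isLt; simp; omega)
    have h3 : (σ.symm ⟨(x : ℕ), by have := x.isLt; omega⟩ : ℕ) =
        (σ.symm ⟨(y : ℕ), by have := y.isLt; omega⟩ : ℕ) := by omega
    have h4 := σ.symm.injective (Fin.ext h3)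
    simp only [Fin.mk.injEq] at h4
    exact Fin.ext h4
  have := Fintype.card_le_of_injective _ inj
  simpa using this

lemma exists_glue_eq (hN : m + 1 + p = N) (σ : Equiv.Perm (Fin N)) (hσ : Avoids132 σ)
    (hmax : (σ ⟨m, by omega⟩ : ℕ) = m + p) :
    ∃ (τ : Equiv.Perm (Fin m)) (ρ : Equiv.Perm (Fin p)), glue hN τ ρ = σ := by
  have hub : ∀ i : Fin N, (i : ℕ) ≠ m → (σ i : ℕ) ≠ m + p := by
    intro i hi h
    have h2 : σ i = σ ⟨m, by omega⟩ := by apply Fin.ext; rw [h, hmax]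
    have h3 := σ.injective h2
    apply hi; rw [h3]
  have hpre : ∀ i : Fin N, (i : ℕ) < m → p ≤ (σ i : ℕ) ∧ (σ i : ℕ) < p + m := by
    intro i hi
    have h1 := prefix_big hN σ hσ hmax hi
    have h2 := hub i (by omega)
    have h3 := (σ i).isLt
    exact ⟨h1, by omega⟩
  let tf : Fin m → Fin m := fun a =>
    ⟨(σ ⟨(a : ℕ), by have := a.isLt; omega⟩ : ℕ) - p, by
      have := hpre ⟨(a : ℕ), by have := a.isLt; omega⟩ a.isLt; omega⟩
  have tinj : Function.Injective tf := by
    intro x y h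
    simp only [tf, Fin.mk.injEq] at h
    have hx := hpre ⟨(x : ℕ), by have := x.isLt; omega⟩ x.isLt
    have hy := hpre ⟨(y : ℕ), by have := y.isLt; omega⟩ y.isLt
    have h3 : (σ ⟨(x : ℕ), by have := x.isLt; omega⟩ : ℕ) =
        (σ ⟨(y : ℕ), by have := y.isLt; omega⟩ : ℕ) := by omega
    have h4 := σ.injective (Fin.ext h3)
    simp only [Fin.mk.injEq] at h4
    exact Fin.ext h4
  let rf : Fin p → Fin p := fun b =>
    ⟨(σ ⟨m + 1 + (b : ℕ), by have := b.isLt; omega⟩ : ℕ),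
      suffix_small hN σ hσ hmax (by show m < m + 1 + (b : ℕ); omega)⟩
  have rinj : Function.Injective rf := by
    intro x y h
    simp only [rf, Fin.mk.injEq] at h
    have h4 := σ.injective (Fin.ext h)
    simp only [Fin.mk.injEq] at h4
    apply Fin.ext; omega
  refine ⟨Equiv.ofBijective tf (Finite.injective_iff_bijective.1 tinj),
    Equiv.ofBijective rf (Finite.injective_iff_bijective.1 rinj), ?_⟩
  apply Equiv.ext
  intro i
  apply Fin.ext
  rw [glue_apply_val]
  have hi := i.isLt
  rcases Nat.lt_trichotomy (i : ℕ) m with h | h | h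
  · rw [glueVal_of_lt _ _ h]
    have h1 := hpre i h
    show p + ((σ ⟨(i : ℕ), by omega⟩ : ℕ) - p) = (σ i : ℕ)
    have h2 : (⟨(i : ℕ), by omega⟩ : Fin N) = i := Fin.ext rfl
    rw [h2]
    omega
  · have h4 : i = (⟨m, by omega⟩ : Fin N) := Fin.ext h
    rw [h4]
    show glueVal _ _ m = _
    rw [glueVal_of_eq]
    exact hmax.symm
  · rw [glueVal_of_gt _ _ h (by omega)]
    show (σ ⟨m + 1 + ((i : ℕ) - (m + 1)), by omega⟩ : ℕ) = (σ i : ℕ)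
    have h4 : (⟨m + 1 + ((i : ℕ) - (m + 1)), by omega⟩ : Fin N) = i := by
      apply Fin.ext; show m + 1 + ((i : ℕ) - (m + 1)) = (i : ℕ); omega
    rw [h4]

noncomputable def F (n : ℕ) : ℕ := Nat.card {σ : Equiv.Perm (Fin n) // Avoids132 σ}

lemma card_inter (hN : m + 1 + p = N) :
    Nat.card {σ : Equiv.Perm (Fin N) //
        Avoids132 σ ∧ σ ⟨m, by omega⟩ = ⟨m + p, by omega⟩} = F m * F p := by
  rw [F, F, ← Nat.card_prod]
  symm
  apply Nat.card_eq_of_bijective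
    (f := fun x => ⟨glue hN x.1.1 x.2.1, by
      refine ⟨(glue_avoids_iff hN _ _).2 ⟨x.1.2, x.2.2⟩, ?_⟩
      apply Fin.ext
      exact glue_apply_mid hN x.1.1 x.2.1⟩)
  constructor
  · rintro ⟨⟨τ, hτ⟩, ⟨ρ, hρ⟩⟩ ⟨⟨τ', hτ'⟩, ⟨ρ', hρ'⟩⟩ h
    simp only [Subtype.mk.injEq, Prod.mk.injEq] at h ⊢
    have hg : ∀ i : Fin N, glueVal τ ρ (i : ℕ) = glueVal τ' ρ' (i : ℕ) := by
      intro i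
      have := congrArg (fun e : Equiv.Perm (Fin N) => ((e i : Fin N) : ℕ)) h
      simpa [glue_apply_val] using this
    constructor
    · apply Equiv.ext
      intro a
      have ha := a.isLt
      have h2 := hg ⟨(a : ℕ), by omega⟩
      rw [show (((⟨(a : ℕ), by omega⟩ : Fin N)) : ℕ) = (a : ℕ) from rfl,
        glueVal_of_lt τ ρ ha, glueVal_of_lt τ' ρ' ha] at h2
      apply Fin.ext
      simp only [Fin.eta] at h2
      omega
    · apply Equiv.ext
      intro b
      have hb := b.isLt
      have h2 := hg ⟨m + 1 + (b : ℕ), by omega⟩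
      rw [show (((⟨m + 1 + (b : ℕ), by omega⟩ : Fin N)) : ℕ) = m + 1 + (b : ℕ) from rfl,
        glueVal_of_gt τ ρ (by omega) (by omega),
        glueVal_of_gt τ' ρ' (by omega) (by omega)] at h2
      have heq : (⟨m + 1 + (b : ℕ) - (m + 1), by omega⟩ : Fin p) = b := by
        apply Fin.ext; show m + 1 + (b : ℕ) - (m + 1) = (b : ℕ); omega
      rw [heq] at h2
      exact Fin.ext h2
  · rintro ⟨σ, hσ, hmax⟩
    obtain ⟨τ, ρ, hglue⟩ := exists_glue_eq hN σ hσ (by rw [hmax])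
    have hτρ := (glue_avoids_iff hN τ ρ).1 (by rw [hglue]; exact hσ)
    exact ⟨⟨⟨τ, hτρ.1⟩, ⟨ρ, hτρ.2⟩⟩, by simp only [Subtype.mk.injEq]; exact hglue⟩

lemma nat_card_sigma {ι : Type*} [Fintype ι] (α : ι → Type*) [∀ i, Finite (α i)] :
    Nat.card (Σ i, α i) = ∑ i, Nat.card (α i) := by
  have := fun i => Fintype.ofFinite (α i)
  simp [Nat.card_eq_fintype_card]

lemma F_zero : F 0 = 1 := by
  have : Unique {σ : Equiv.Perm (Fin 0) // Avoids132 σ} := by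
    refine ⟨⟨⟨1, ?_⟩⟩, ?_⟩
    · rintro ⟨j, -⟩; exact j.elim0
    · rintro ⟨σ, hσ⟩
      have h : σ = 1 := by apply Equiv.ext; intro i; exact i.elim0
      simp [h]
  rw [F, Nat.card_unique]

lemma F_succ (n : ℕ) : F (n + 1) = ∑ i : Fin (n + 1), F (i : ℕ) * F (n - (i : ℕ)) := by
  classical
  rw [F]
  rw [Nat.card_congr
    (Equiv.sigmaFiberEquiv (fun x : {σ : Equiv.Perm (Fin (n + 1)) // Avoids132 σ} =>
      x.val.symm ⟨n, by omega⟩)).symm]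
  rw [nat_card_sigma]
  apply Finset.sum_congr rfl
  intro i _
  have hi := i.isLt
  have hN : (i : ℕ) + 1 + (n - (i : ℕ)) = n + 1 := by omega
  rw [← card_inter hN]
  apply Nat.card_congr
  refine (Equiv.subtypeSubtypeEquivSubtypeInter (fun σ : Equiv.Perm (Fin (n + 1)) => Avoids132 σ)
    (fun σ : Equiv.Perm (Fin (n + 1)) => σ.symm ⟨n, by omega⟩ = i)).trans
    (Equiv.subtypeEquivRight ?_)
  intro σ
  constructor
  · rintro ⟨hσ, hsymm⟩
    refine ⟨hσ, ?_⟩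
    have h1 : σ i = ⟨n, by omega⟩ := by
      rw [← hsymm, Equiv.apply_symm_apply]
    have h2 : (⟨(i : ℕ), by omega⟩ : Fin (n + 1)) = i := Fin.ext rfl
    rw [h2, h1]
    apply Fin.ext; show n = (i : ℕ) + (n - (i : ℕ)); omega
  · rintro ⟨hσ, hmk⟩
    refine ⟨hσ, ?_⟩
    rw [Equiv.symm_apply_eq]
    have h3 : σ i = ⟨(i : ℕ) + (n - (i : ℕ)), by omega⟩ := hmk
    rw [h3]
    apply Fin.ext; show n = (i : ℕ) + (n - (i : ℕ)); omega

lemma F_eq_catalan (n : ℕ) : F n = catalan n := by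
  induction n using Nat.strong_induction_on with
  | _ n ih =>
    match n with
    | 0 => rw [F_zero, catalan_zero]
    | Nat.succ n =>
      rw [F_succ, catalan_succ]
      apply Finset.sum_congr rfl
      intro i _
      have hi := i.isLt
      rw [ih (i : ℕ) (by omega), ih (n - (i : ℕ)) (by omega)]

end Avoid132Aux

open Avoid132Aux in
/-- The number of 132-avoiding permutations of `S_{n+1}` beginning with `n+1` is the
`n`-th Catalan number `(1/(n+1))·binom(2n,n)`. -/
theorem ballot_top_eq_catalan (n : ℕ) :
    ballot (n + 1) (n + 1) = Nat.choose (2 * n) n / (n + 1) := by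
  have hN : 0 + 1 + n = n + 1 := by omega
  have step1 : ballot (n + 1) (n + 1) = F 0 * F n := by
    rw [ballot, ← card_inter hN]
    apply Nat.card_congr
    apply Equiv.subtypeEquivRight
    intro σ
    constructor
    · rintro ⟨hσ, h⟩
      refine ⟨hσ, ?_⟩
      have h2 := h (by omega)
      apply Fin.ext
      show ((σ ⟨0, by omega⟩ : Fin (n + 1)) : ℕ) = 0 + n
      omega
    · rintro ⟨hσ, h⟩
      refine ⟨hσ, fun _ => ?_⟩
      have h2 : ((σ ⟨0, by omega⟩ : Fin (n + 1)) : ℕ) = 0 + n := by rw [h]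
      omega
  rw [step1, F_zero, one_mul, F_eq_catalan]
  symm
  apply Nat.div_eq_of_eq_mul_left (Nat.succ_pos n)
  show (2 * n).choose n = catalan n * (n + 1)
  rw [Nat.mul_comm (catalan n) (n + 1), succ_mul_catalan_eq_centralBinom]
  rfl
end

section
/- If σ ∈ S_n is an alternating permutation (σ(1) > σ(2) < σ(3) > ⋯) with Lehmer code (L_1,…,L_n), then setting L_0 := 0 we have L_{2i−1} − L_{2i} ≥ 1 and L_{2i} ≤ L_{2i+1} for all valid i; equivalently, the quantities Δ_{2i} = L_{2i−1} − L_{2i} − 1 and δ_{2i+1} = L_{2i+1} − L_{2i} are all nonnegative. -/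
/-- The Lehmer code `L_i` (1-based `i`, `1 ≤ i ≤ n`) of a permutation:
`L_i = #{j > i : σ(j) < σ(i)}`. For `i` out of range the value is `0`. -/
def lcode {n : ℕ} (σ : Equiv.Perm (Fin n)) (i : ℕ) : ℕ :=
  (Finset.univ.filter
    (fun p : Fin n × Fin n => ((p.1 : ℕ) + 1 = i) ∧ p.1 < p.2 ∧ σ p.2 < σ p.1)).card

lemma lcode_zero {n : ℕ} (σ : Equiv.Perm (Fin n)) : lcode σ 0 = 0 := by
  unfold lcode
  rw [Finset.card_eq_zero, Finset.filter_eq_empty_iff]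
  intro p _
  simp

lemma lcode_eq {n : ℕ} (σ : Equiv.Perm (Fin n)) (i : ℕ) (h : i < n) :
    lcode σ (i + 1) =
      (Finset.univ.filter
        (fun j : Fin n => (⟨i, h⟩ : Fin n) < j ∧ σ j < σ ⟨i, h⟩)).card := by
  unfold lcode
  apply Finset.card_bij (fun p _ => p.2)
  · intro p hp
    simp only [Finset.mem_filter, Finset.mem_univ, true_and] at hp ⊢
    obtain ⟨h1, h2, h3⟩ := hp
    have hp1 : p.1 = ⟨i, h⟩ := Fin.ext (by simp only [Fin.val_mk]; omega)
    rw [hp1] at h2 h3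
    exact ⟨h2, h3⟩
  · intro p hp q hq hpq
    simp only [Finset.mem_filter, Finset.mem_univ, true_and] at hp hq
    have : p.1 = q.1 := Fin.ext (by omega)
    exact Prod.ext this hpq
  · intro j hj
    simp only [Finset.mem_filter, Finset.mem_univ, true_and] at hj
    exact ⟨(⟨i, h⟩, j), by simp [hj], rfl⟩

lemma lcode_descent {n : ℕ} (σ : Equiv.Perm (Fin n)) (k : ℕ) (h : k + 1 < n)
    (hd : σ ⟨k + 1, h⟩ < σ ⟨k, Nat.lt_of_succ_lt h⟩) :
    lcode σ (k + 2) + 1 ≤ lcode σ (k + 1) := by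
  rw [lcode_eq σ k (Nat.lt_of_succ_lt h), show k + 2 = (k + 1) + 1 from rfl,
    lcode_eq σ (k + 1) h]
  have hss : (Finset.univ.filter
        (fun j : Fin n => (⟨k + 1, h⟩ : Fin n) < j ∧ σ j < σ ⟨k + 1, h⟩)) ⊂
      (Finset.univ.filter
        (fun j : Fin n => (⟨k, Nat.lt_of_succ_lt h⟩ : Fin n) < j ∧
          σ j < σ ⟨k, Nat.lt_of_succ_lt h⟩)) := by
    constructor
    · intro j hj
      simp only [Finset.mem_filter, Finset.mem_univ, true_and, Fin.lt_def, Fin.val_mk] at hj ⊢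
      exact ⟨by omega, lt_trans hj.2 hd⟩
    · intro hsub
      have hmem : (⟨k + 1, h⟩ : Fin n) ∈ (Finset.univ.filter
          (fun j : Fin n => (⟨k, Nat.lt_of_succ_lt h⟩ : Fin n) < j ∧
            σ j < σ ⟨k, Nat.lt_of_succ_lt h⟩)) := by
        simp only [Finset.mem_filter, Finset.mem_univ, true_and, Fin.lt_def, Fin.val_mk]
        exact ⟨by omega, hd⟩
      have := hsub hmem
      simp only [Finset.mem_filter, Finset.mem_univ, true_and, Fin.lt_def, Fin.val_mk] at this
      omega
  have := Finset.card_lt_card hss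
  omega

lemma lcode_ascent {n : ℕ} (σ : Equiv.Perm (Fin n)) (k : ℕ) (h : k + 1 < n)
    (ha : σ ⟨k, Nat.lt_of_succ_lt h⟩ < σ ⟨k + 1, h⟩) :
    lcode σ (k + 1) ≤ lcode σ (k + 2) := by
  rw [lcode_eq σ k (Nat.lt_of_succ_lt h), show k + 2 = (k + 1) + 1 from rfl,
    lcode_eq σ (k + 1) h]
  apply Finset.card_le_card
  intro j hj
  simp only [Finset.mem_filter, Finset.mem_univ, true_and, Fin.lt_def, Fin.val_mk] at hj ⊢
  have hne : (j : ℕ) ≠ k + 1 := by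
    intro he
    have : j = (⟨k + 1, h⟩ : Fin n) := Fin.ext he
    rw [this] at hj
    exact absurd (lt_trans hj.2 ha) (lt_irrefl _)
  exact ⟨by omega, lt_trans hj.2 ha⟩

/-- If `σ` is alternating with Lehmer code `(L_1,…,L_n)` and `L_0 := 0`, then
`L_{2i-1} - L_{2i} ≥ 1` and `L_{2i} ≤ L_{2i+1}` for all valid `i`. -/
theorem lehmer_of_alt {n : ℕ} (σ : Equiv.Perm (Fin n)) (hσ : IsAlt σ) :
    (∀ i : ℕ, 1 ≤ i → 2 * i ≤ n → lcode σ (2 * i) + 1 ≤ lcode σ (2 * i - 1)) ∧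
    (∀ i : ℕ, 2 * i + 1 ≤ n → lcode σ (2 * i) ≤ lcode σ (2 * i + 1)) := by
  constructor
  · intro i h1 h2
    obtain ⟨j, rfl⟩ : ∃ j, i = j + 1 := ⟨i - 1, by omega⟩
    have hlt : 2 * j + 1 < n := by omega
    have hd := hσ (2 * j) hlt
    rw [if_pos (by omega)] at hd
    have := lcode_descent σ (2 * j) hlt hd
    rw [show 2 * (j + 1) - 1 = 2 * j + 1 by omega, show 2 * (j + 1) = 2 * j + 2 by ring]
    exact this
  · intro i h
    match i with
    | 0 => simp [lcode_zero]
    | j + 1 =>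
      have hlt : (2 * j + 1) + 1 < n := by omega
      have ha := hσ (2 * j + 1) hlt
      rw [if_neg (by omega)] at ha
      have := lcode_ascent σ (2 * j + 1) hlt ha
      rw [show 2 * (j + 1) + 1 = (2 * j + 1) + 2 by ring,
        show 2 * (j + 1) = (2 * j + 1) + 1 by ring]
      exact this
end

section
/- A permutation σ ∈ S_n is 132-avoiding if and only if its Lehmer code (L_1,…,L_n) is weakly decreasing, i.e. L_1 ≥ L_2 ≥ ⋯ ≥ L_n. -/
def lset {n : ℕ} (σ : Equiv.Perm (Fin n)) (a : Fin n) : Finset (Fin n) :=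
  Finset.univ.filter (fun b => a < b ∧ σ b < σ a)

lemma lcode_eq_s9 {n : ℕ} (σ : Equiv.Perm (Fin n)) (a : Fin n) :
    lcode σ ((a : ℕ) + 1) = (lset σ a).card := by
  unfold lcode lset
  apply Finset.card_bij (fun p _ => p.2)
  · rintro ⟨x, y⟩ hp
    simp only [Finset.mem_filter, Finset.mem_univ, true_and] at hp ⊢
    obtain ⟨h1, h2, h3⟩ := hp
    have hx : x = a := Fin.ext (by omega)
    subst hx
    exact ⟨h2, h3⟩
  · rintro ⟨x, y⟩ hp ⟨x', y'⟩ hp' h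
    simp only [Finset.mem_filter, Finset.mem_univ, true_and] at hp hp'
    have hx : x = a := Fin.ext (by omega)
    have hx' : x' = a := Fin.ext (by omega)
    simp only at h
    subst hx hx' h
    rfl
  · intro b hb
    simp only [Finset.mem_filter, Finset.mem_univ, true_and] at hb
    exact ⟨(a, b), by simp [hb], rfl⟩

lemma lset_subset {n : ℕ} (σ : Equiv.Perm (Fin n)) (hav : Avoids132 σ)
    (a b : Fin n) (hab : (a : ℕ) + 1 = (b : ℕ)) : lset σ b ⊆ lset σ a := by
  intro m hm
  simp only [lset, Finset.mem_filter, Finset.mem_univ, true_and] at hm ⊢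
  obtain ⟨h1, h2⟩ := hm
  have hab' : a < b := by rw [Fin.lt_def]; omega
  refine ⟨lt_trans hab' h1, ?_⟩
  rcases lt_trichotomy (σ m) (σ a) with h | h | h
  · exact h
  · exfalso
    have e := congrArg Fin.val (σ.injective h)
    rw [Fin.lt_def] at h1
    omega
  · exact absurd ⟨a, b, m, hab', h1, h, h2⟩ hav

lemma exists_adjacent {n : ℕ} (σ : Equiv.Perm (Fin n))
    (h : ∃ j k l : Fin n, j < k ∧ k < l ∧ σ j < σ l ∧ σ l < σ k) :
    ∃ j k l : Fin n, j < k ∧ k < l ∧ σ j < σ l ∧ σ l < σ k ∧ (k : ℕ) = (j : ℕ) + 1 := by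
  obtain ⟨j, k, l, h1, h2, h3, h4⟩ := h
  have key : ∀ d (j k l : Fin n), (k : ℕ) - (j : ℕ) ≤ d → j < k → k < l →
      σ j < σ l → σ l < σ k →
      ∃ j k l : Fin n, j < k ∧ k < l ∧ σ j < σ l ∧ σ l < σ k ∧ (k : ℕ) = (j : ℕ) + 1 := by
    intro d
    induction d with
    | zero =>
      intro j k l hd h1 _ _ _
      rw [Fin.lt_def] at h1; omega
    | succ d ih =>
      intro j k l hd h1 h2 h3 h4
      by_cases hadj : (k : ℕ) = (j : ℕ) + 1
      · exact ⟨j, k, l, h1, h2, h3, h4, hadj⟩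
      · have hjk : (j : ℕ) + 1 < (k : ℕ) := by rw [Fin.lt_def] at h1; omega
        have hkn : (k : ℕ) < n := k.isLt
        set m : Fin n := ⟨(j : ℕ) + 1, by omega⟩ with hm
        have hm1 : j < m := by rw [Fin.lt_def]; simp [hm]
        have hmk : m < k := by rw [Fin.lt_def]; simp [hm]; omega
        have hml : m < l := lt_trans hmk h2
        have hne : σ m ≠ σ l := fun e => (ne_of_lt hml) (σ.injective e)
        rcases lt_or_gt_of_ne hne with hc | hc
        · exact ih m k l (by rw [Fin.lt_def] at h1; simp [hm]; omega) hmk h2 hc h4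
        · exact ⟨j, m, l, hm1, hml, h3, hc, by simp [hm]⟩
  exact key ((k : ℕ) - (j : ℕ)) j k l le_rfl h1 h2 h3 h4

/-- `σ` is 132-avoiding iff its Lehmer code `(L_1,…,L_n)` is weakly decreasing. -/
theorem avoids132_iff_lehmer_antitone {n : ℕ} (σ : Equiv.Perm (Fin n)) :
    Avoids132 σ ↔ ∀ i j : ℕ, 1 ≤ i → i ≤ j → j ≤ n → lcode σ j ≤ lcode σ i := by
  constructor
  · intro hav i j hi hij hjn
    induction j, hij using Nat.le_induction with
    | base => exact le_rfl
    | succ j hj ih =>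
      have h1j : 1 ≤ j := le_trans hi hj
      refine le_trans ?_ (ih (by omega))
      -- show lcode σ (j+1) ≤ lcode σ j
      have ha : j - 1 < n := by omega
      have hb : j < n := by omega
      set a : Fin n := ⟨j - 1, ha⟩ with hadef
      set b : Fin n := ⟨j, hb⟩ with hbdef
      have ea : (a : ℕ) + 1 = j := by simp [hadef]; omega
      have eb : (b : ℕ) + 1 = j + 1 := by simp [hbdef]
      have e1 := lcode_eq_s9 σ a
      have e2 := lcode_eq_s9 σ b
      rw [ea] at e1
      rw [eb] at e2
      rw [e1, e2]
      exact Finset.card_le_card (lset_subset σ hav a b (by simp [hadef, hbdef]; omega))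
  · intro hle hpat
    obtain ⟨j, k, l, h1, h2, h3, h4, h5⟩ := exists_adjacent σ hpat
    have hsub : lset σ j ⊆ lset σ k := by
      intro m hm
      simp only [lset, Finset.mem_filter, Finset.mem_univ, true_and] at hm ⊢
      obtain ⟨hm1, hm2⟩ := hm
      have hsm : σ m < σ k := lt_trans hm2 (lt_trans h3 h4)
      have hmk : m ≠ k := fun e => (ne_of_lt hsm) (by rw [e])
      refine ⟨?_, hsm⟩
      rw [Fin.lt_def] at hm1 ⊢
      have : (m : ℕ) ≠ (k : ℕ) := fun e => hmk (Fin.ext e)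
      omega
    have hmemk : l ∈ lset σ k := by
      simp only [lset, Finset.mem_filter, Finset.mem_univ, true_and]
      exact ⟨h2, h4⟩
    have hmemj : l ∉ lset σ j := by
      simp only [lset, Finset.mem_filter, Finset.mem_univ, true_and]
      rintro ⟨-, hc⟩
      exact absurd h3 (lt_asymm hc)
    have hlt : (lset σ j).card < (lset σ k).card :=
      Finset.card_lt_card ⟨hsub, fun h => hmemj (h hmemk)⟩
    have e1 := lcode_eq_s9 σ j
    have e2 := lcode_eq_s9 σ k
    have hkn : (k : ℕ) < n := k.isLt
    have := hle ((j : ℕ) + 1) ((k : ℕ) + 1) (by omega) (by omega) (by omega)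
    omega
end

section
/- The minimal element of the set of alternating permutations of S_n under the Bruhat order is the product of adjacent transpositions σ = (1 2)(3 4)(5 6)⋯, which has exactly ⌊n/2⌋ inversions; every alternating permutation of S_n has at least ⌊n/2⌋ inversions. -/
/-- The number of inversions of a permutation. -/
def invNum {n : ℕ} (σ : Equiv.Perm (Fin n)) : ℕ :=
  (Finset.univ.filter (fun p : Fin n × Fin n => p.1 < p.2 ∧ σ p.2 < σ p.1)).card

/-- The Bruhat order on `S_n`, via the standard rank-matrix characterization:
`σ ≤ τ` iff for all `i, j`, `#{a ≤ i : σ(a) ≥ j} ≤ #{a ≤ i : τ(a) ≥ j}`. -/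
def bruhatLE {n : ℕ} (σ τ : Equiv.Perm (Fin n)) : Prop :=
  ∀ i j : Fin n,
    (Finset.univ.filter (fun a => a ≤ i ∧ j ≤ σ a)).card ≤
    (Finset.univ.filter (fun a => a ≤ i ∧ j ≤ τ a)).card

/-- The permutation `(1 2)(3 4)(5 6)⋯`, the product of the transpositions of
consecutive pairs. -/
def minAlt (n : ℕ) : Equiv.Perm (Fin n) :=
  Function.Involutive.toPerm
    (fun i => ⟨if (i : ℕ) % 2 = 1 then (i : ℕ) - 1
               else if (i : ℕ) + 1 < n then (i : ℕ) + 1 else (i : ℕ),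
      by rcases i with ⟨i, hi⟩; dsimp only; split_ifs <;> omega⟩)
    (by
      intro i; rcases i with ⟨i, hi⟩
      apply Fin.ext
      dsimp only
      split_ifs <;> omega)

lemma minAlt_val {n : ℕ} (a : Fin n) :
    ((minAlt n a : Fin n) : ℕ) =
      if (a : ℕ) % 2 = 1 then (a : ℕ) - 1
      else if (a : ℕ) + 1 < n then (a : ℕ) + 1 else (a : ℕ) := rfl

lemma minAlt_le {n : ℕ} (a : Fin n) :
    (a : ℕ) ≤ ((minAlt n a : Fin n) : ℕ) + 1 ∧ ((minAlt n a : Fin n) : ℕ) ≤ (a : ℕ) + 1 := by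
  rw [minAlt_val]; split_ifs <;> omega

lemma isAlt_minAlt {n : ℕ} : IsAlt (minAlt n) := by
  intro i h
  split_ifs with hpar <;>
  · rw [Fin.lt_def, minAlt_val, minAlt_val]
    simp only [Fin.val_mk]
    split_ifs <;> omega

lemma card_filter_lt {n : ℕ} (σ : Equiv.Perm (Fin n)) (j : Fin n) :
    (Finset.univ.filter fun a => σ a < j).card = (j : ℕ) := by
  have : (Finset.univ.filter fun a => σ a < j) = (Finset.Iio j).map σ.symm.toEmbedding := by
    ext a
    simp [Equiv.symm_apply_eq]
  rw [this, Finset.card_map, Fin.card_Iio]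

lemma split_card {n : ℕ} (σ : Equiv.Perm (Fin n)) (i j : Fin n) :
    (Finset.univ.filter fun a => a ≤ i ∧ j ≤ σ a).card +
      (Finset.univ.filter fun a => a ≤ i ∧ σ a < j).card = (i : ℕ) + 1 := by
  have e1 : (Finset.univ.filter fun a => a ≤ i ∧ j ≤ σ a) =
      (Finset.univ.filter fun a : Fin n => a ≤ i).filter (fun a => j ≤ σ a) := by
    rw [Finset.filter_filter]
  have e2 : (Finset.univ.filter fun a => a ≤ i ∧ σ a < j) =
      (Finset.univ.filter fun a : Fin n => a ≤ i).filter (fun a => ¬ j ≤ σ a) := by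
    rw [Finset.filter_filter]
    simp [not_le]
  rw [e1, e2, Finset.card_filter_add_card_filter_not]
  have : (Finset.univ.filter fun a : Fin n => a ≤ i) = Finset.Iic i := by
    ext a; simp
  rw [this, Fin.card_Iic]

lemma lower_bound {n : ℕ} (σ : Equiv.Perm (Fin n)) (i j : Fin n) :
    (i : ℕ) + 1 - (j : ℕ) ≤ (Finset.univ.filter fun a => a ≤ i ∧ j ≤ σ a).card := by
  have h := split_card σ i j
  have h2 : (Finset.univ.filter fun a => a ≤ i ∧ σ a < j).card ≤ (j : ℕ) := by
    rw [← card_filter_lt σ j]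
    apply Finset.card_le_card
    intro a ha
    simp only [Finset.mem_filter] at ha ⊢
    exact ⟨ha.1, ha.2.2⟩
  omega

lemma upper_bound {n : ℕ} (i j : Fin n) (hj : (j : ℕ) ≤ (i : ℕ)) :
    (Finset.univ.filter fun a => a ≤ i ∧ j ≤ (minAlt n) a).card ≤ (i : ℕ) + 1 - (j : ℕ) := by
  have h := split_card (minAlt n) i j
  have h2 : (j : ℕ) ≤ (Finset.univ.filter fun a => a ≤ i ∧ (minAlt n) a < j).card := by
    rw [← card_filter_lt (minAlt n) j]
    apply Finset.card_le_card
    intro a ha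
    simp only [Finset.mem_filter] at ha ⊢
    refine ⟨ha.1, ?_, ha.2⟩
    have hb := (minAlt_le a).1
    have hlt : ((minAlt n a : Fin n) : ℕ) < (j : ℕ) := ha.2
    rw [Fin.le_def]
    omega
  omega

lemma exists_big {n : ℕ} (σ : Equiv.Perm (Fin n)) (hσ : IsAlt σ) (i : ℕ)
    (hi : i % 2 = 0) (h : i + 1 < n) :
    ∃ a : Fin n, (a : ℕ) ≤ i ∧ i + 1 ≤ ((σ a : Fin n) : ℕ) := by
  by_contra hc
  push_neg at hc
  have hc' : ∀ a : Fin n, (a : ℕ) ≤ i → ((σ a : Fin n) : ℕ) ≤ i := by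
    intro a ha; have := hc a ha; omega
  set A : Finset (Fin n) := Finset.univ.filter (fun a => (a : ℕ) ≤ i) with hA
  have hmap : A.image σ ⊆ A := by
    intro b hb
    simp only [hA, Finset.mem_image, Finset.mem_filter] at hb ⊢
    obtain ⟨a, ha, rfl⟩ := hb
    exact ⟨Finset.mem_univ _, hc' a ha.2⟩
  have himg : A.image σ = A :=
    Finset.eq_of_subset_of_card_le hmap
      (le_of_eq (Finset.card_image_of_injective _ σ.injective).symm)
  have halt := hσ i h
  rw [if_pos hi] at halt
  have hσi : ((σ ⟨i, Nat.lt_of_succ_lt h⟩ : Fin n) : ℕ) ≤ i := hc' _ (le_refl i)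
  have hσi1 : ((σ ⟨i + 1, h⟩ : Fin n) : ℕ) ≤ i := by
    have := Fin.lt_def.mp halt; omega
  have : σ ⟨i + 1, h⟩ ∈ A := by
    simp only [hA, Finset.mem_filter]
    exact ⟨Finset.mem_univ _, hσi1⟩
  rw [← himg, Finset.mem_image] at this
  obtain ⟨a, ha, hae⟩ := this
  have : a = ⟨i + 1, h⟩ := σ.injective hae
  simp only [hA, Finset.mem_filter, this] at ha
  omega

lemma bruhat_min {n : ℕ} (σ : Equiv.Perm (Fin n)) (hσ : IsAlt σ) :
    bruhatLE (minAlt n) σ := by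
  intro i j
  rcases le_or_gt (j : ℕ) (i : ℕ) with hj | hj
  · exact le_trans (upper_bound i j hj) (by have := lower_bound σ i j; omega)
  · by_cases hsp : (i : ℕ) % 2 = 0 ∧ (j : ℕ) = (i : ℕ) + 1
    · -- special case
      have hc1 : (Finset.univ.filter fun a => a ≤ i ∧ j ≤ (minAlt n) a).card ≤ 1 := by
        apply Finset.card_le_one.mpr
        intro a ha b hb
        simp only [Finset.mem_filter] at ha hb
        have ha2 : (j : ℕ) ≤ ((minAlt n a : Fin n) : ℕ) := ha.2.2
        have hb2 : (j : ℕ) ≤ ((minAlt n b : Fin n) : ℕ) := hb.2.2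
        have ha1 : (a : ℕ) ≤ (i : ℕ) := ha.2.1
        have hb1 : (b : ℕ) ≤ (i : ℕ) := hb.2.1
        have hba := (minAlt_le a).2
        have hbb := (minAlt_le b).2
        apply Fin.ext
        omega
      have hc2 : 1 ≤ (Finset.univ.filter fun a => a ≤ i ∧ j ≤ σ a).card := by
        obtain ⟨a, ha1, ha2⟩ := exists_big σ hσ (i : ℕ) hsp.1 (by omega)
        apply Finset.card_pos.mpr
        exact ⟨a, by simp only [Finset.mem_filter]; exact ⟨Finset.mem_univ _, Fin.le_def.mpr ha1, Fin.le_def.mpr (by omega)⟩⟩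
      omega
    · -- minAlt filter empty
      have : (Finset.univ.filter fun a => a ≤ i ∧ j ≤ (minAlt n) a) = ∅ := by
        apply Finset.filter_false_of_mem
        intro a _
        rintro ⟨ha1, ha2⟩
        have ha1' : (a : ℕ) ≤ (i : ℕ) := ha1
        have ha2' : (j : ℕ) ≤ ((minAlt n a : Fin n) : ℕ) := ha2
        rw [minAlt_val] at ha2'
        split_ifs at ha2' <;> omega
      rw [this]
      simp

lemma mem_inv_minAlt {n : ℕ} (p : Fin n × Fin n) :
    (p.1 < p.2 ∧ (minAlt n) p.2 < (minAlt n) p.1) ↔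
      ((p.1 : ℕ) % 2 = 0 ∧ (p.2 : ℕ) = (p.1 : ℕ) + 1) := by
  rw [Fin.lt_def, Fin.lt_def, minAlt_val, minAlt_val]
  have h1 := p.1.isLt
  have h2 := p.2.isLt
  split_ifs <;> omega

noncomputable def gpair {n : ℕ} (hn : 0 < n) (k : ℕ) : Fin n × Fin n :=
  (⟨2 * k % n, Nat.mod_lt _ hn⟩, ⟨(2 * k + 1) % n, Nat.mod_lt _ hn⟩)

lemma gpair_inj {n : ℕ} (hn : 0 < n) :
    Set.InjOn (gpair hn) (Finset.range (n / 2)) := by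
  intro k hk k' hk' he
  simp only [Finset.coe_range, Set.mem_Iio] at hk hk'
  have := congrArg (fun p : Fin n × Fin n => (p.1 : ℕ)) he
  simp only [gpair] at this
  have e1 : 2 * k % n = 2 * k := Nat.mod_eq_of_lt (by omega)
  have e2 : 2 * k' % n = 2 * k' := Nat.mod_eq_of_lt (by omega)
  omega

lemma invNum_minAlt {n : ℕ} (hn : 0 < n) : invNum (minAlt n) = n / 2 := by
  have himg : (Finset.univ.filter
      (fun p : Fin n × Fin n => p.1 < p.2 ∧ minAlt n p.2 < minAlt n p.1)) =
      (Finset.range (n / 2)).image (gpair hn) := by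
    ext p
    simp only [Finset.mem_filter, Finset.mem_univ, true_and, Finset.mem_image,
      Finset.mem_range]
    rw [mem_inv_minAlt]
    constructor
    · rintro ⟨hpar, heq⟩
      have h2 := p.2.isLt
      refine ⟨(p.1 : ℕ) / 2, by omega, ?_⟩
      have h2k : 2 * ((p.1 : ℕ) / 2) = (p.1 : ℕ) := by omega
      have e1 : 2 * ((p.1 : ℕ) / 2) % n = (p.1 : ℕ) := by
        rw [h2k]; exact Nat.mod_eq_of_lt p.1.isLt
      have e2 : (2 * ((p.1 : ℕ) / 2) + 1) % n = (p.2 : ℕ) := by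
        rw [h2k, ← heq]; exact Nat.mod_eq_of_lt p.2.isLt
      simp only [gpair]
      exact Prod.ext (Fin.ext e1) (Fin.ext e2)
    · rintro ⟨k, hk, rfl⟩
      simp only [gpair]
      have e1 : 2 * k % n = 2 * k := Nat.mod_eq_of_lt (by omega)
      have e2 : (2 * k + 1) % n = 2 * k + 1 := Nat.mod_eq_of_lt (by omega)
      simp only [e1, e2]
      exact ⟨by omega, trivial⟩
  rw [invNum, himg, Finset.card_image_of_injOn (gpair_inj hn), Finset.card_range]

lemma invNum_ge {n : ℕ} (σ : Equiv.Perm (Fin n)) (hσ : IsAlt σ) (hn : 0 < n) :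
    n / 2 ≤ invNum σ := by
  have hsub : (Finset.range (n / 2)).image (gpair hn) ⊆
      Finset.univ.filter (fun p : Fin n × Fin n => p.1 < p.2 ∧ σ p.2 < σ p.1) := by
    intro p hp
    simp only [Finset.mem_image, Finset.mem_range] at hp
    obtain ⟨k, hk, rfl⟩ := hp
    have hlt : 2 * k + 1 < n := by omega
    have e1 : 2 * k % n = 2 * k := Nat.mod_eq_of_lt (by omega)
    have e2 : (2 * k + 1) % n = 2 * k + 1 := Nat.mod_eq_of_lt hlt
    have halt := hσ (2 * k) hlt
    rw [if_pos (by omega)] at halt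
    simp only [Finset.mem_filter, Finset.mem_univ, true_and, gpair]
    constructor
    · rw [Fin.lt_def]; simp only [e1, e2]; omega
    · have ha : (⟨2 * k % n, Nat.mod_lt _ hn⟩ : Fin n) = ⟨2 * k, by omega⟩ :=
        Fin.ext e1
      have hb : (⟨(2 * k + 1) % n, Nat.mod_lt _ hn⟩ : Fin n) = ⟨2 * k + 1, hlt⟩ :=
        Fin.ext e2
      rw [ha, hb]
      exact halt
  calc n / 2 = ((Finset.range (n / 2)).image (gpair hn)).card := by
        rw [Finset.card_image_of_injOn (gpair_inj hn), Finset.card_range]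
    _ ≤ _ := Finset.card_le_card hsub

/-- `(1 2)(3 4)⋯` is the minimal alternating permutation in the Bruhat order; it has
exactly `⌊n/2⌋` inversions, and every alternating permutation has at least `⌊n/2⌋`
inversions. -/
theorem minAlt_minimal (n : ℕ) (hn : 2 ≤ n) :
    IsAlt (minAlt n) ∧ invNum (minAlt n) = n / 2 ∧
    ∀ σ : Equiv.Perm (Fin n), IsAlt σ → bruhatLE (minAlt n) σ ∧ n / 2 ≤ invNum σ := by
  refine ⟨isAlt_minAlt, invNum_minAlt (by omega), fun σ hσ =>
    ⟨bruhat_min σ hσ, invNum_ge σ hσ (by omega)⟩⟩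
end
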